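/- arXiv:2107.14113 — 6 statements merged into one kernel-verified Lean document; each statement's English description precedes it below -/
import Mathlib

section
/- Let (ξ_n) be a sequence of R^d-valued random variables on a probability space with sup_n |ξ_n| < ∞ almost surely. Then there exists a sequence η_n of convex combinations η_n ∈ conv{ξ_n, ξ_{n+1}, ...} (formed ω-wise with measurable weights) that converges almost surely to some R^d-valued random variable η. -/
/-!
In a Hilbert space the closed convex hulls of the tails of a bounded sequence decrease, and their
minimal-norm points form a Cauchy sequence by the parallelogram law; its limit lies in every hull,
so it is a norm limit of forward convex combinations. Reweighting `P` by `(1 + supₙ ‖ξₙ‖)⁻²`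
makes `ξ` bounded in `L²` without changing the null sets. Applying the Hilbert-space statement in
`L²`, passing to an a.e. convergent subsequence and taking the convex combinations of the
representatives `ξₖ` gives the result; `Fin d → ℝ` is linearly homeomorphic to Euclidean space.
-/

open MeasureTheory Filter Set Topology
open scoped ENNReal

section TailSet

variable {E F : Type*}

def tailSet (x : ℕ → E) (n : ℕ) : Set E := {p | ∃ k, n ≤ k ∧ p = x k}

lemma mem_tailSet_self (x : ℕ → E) (n : ℕ) : x n ∈ tailSet x n := ⟨n, le_rfl, rfl⟩

lemma tailSet_antitone (x : ℕ → E) : Antitone (tailSet x) :=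
  fun _ _ h _ ⟨k, hk, he⟩ => ⟨k, h.trans hk, he⟩

lemma image_tailSet (f : E → F) (x : ℕ → E) (n : ℕ) : f '' tailSet x n = tailSet (f ∘ x) n := by
  ext p
  constructor
  · rintro ⟨_, ⟨k, hk, rfl⟩, rfl⟩
    exact ⟨k, hk, rfl⟩
  · rintro ⟨k, hk, rfl⟩
    exact ⟨x k, ⟨k, hk, rfl⟩, rfl⟩

end TailSet

section Hilbert

variable {H : Type*} [NormedAddCommGroup H] [InnerProductSpace ℝ H]

lemma norm_sub_sq_le_of_norm_le_norm_midpoint {a u v : H} (h : ‖a‖ ≤ ‖(1 / 2 : ℝ) • (u + v)‖) :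
    ‖u - v‖ ^ 2 ≤ 2 * ‖u‖ ^ 2 + 2 * ‖v‖ ^ 2 - 4 * ‖a‖ ^ 2 := by
  rw [norm_smul, Real.norm_of_nonneg (by norm_num)] at h
  have hpar := parallelogram_law_with_norm ℝ u v
  nlinarith [norm_nonneg a]

lemma cauchySeq_of_antitone_of_forall_norm_le {S : ℕ → Set H} (hconv : ∀ n, Convex ℝ (S n))
    (hanti : Antitone S) {y : ℕ → H} (hyS : ∀ n, y n ∈ S n)
    (hmin : ∀ n, ∀ w ∈ S n, ‖y n‖ ≤ ‖w‖) {C : ℝ} (hC : ∀ n, ‖y n‖ ≤ C) : CauchySeq y := by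
  set δ : ℕ → ℝ := fun n => ‖y n‖
  have hδmono : Monotone δ := fun n m h => hmin n (y m) (hanti h (hyS m))
  have hδbdd : BddAbove (range δ) := ⟨C, forall_mem_range.2 hC⟩
  set L := ⨆ n, δ n
  have hδL : ∀ n, δ n ≤ L := le_ciSup hδbdd
  have hsq : ∀ N n m, N ≤ n → N ≤ m → ‖y n - y m‖ ^ 2 ≤ 4 * (L ^ 2 - δ N ^ 2) := by
    intro N n m hn hm
    have hmid : (1 / 2 : ℝ) • (y n + y m) ∈ S N := by
      rw [smul_add]
      exact hconv N (hanti hn (hyS n)) (hanti hm (hyS m)) (by norm_num) (by norm_num)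
        (by norm_num)
    have h := norm_sub_sq_le_of_norm_le_norm_midpoint (hmin N _ hmid)
    have hn' := pow_le_pow_left₀ (norm_nonneg _) (hδL n) 2
    have hm' := pow_le_pow_left₀ (norm_nonneg _) (hδL m) 2
    linarith
  refine cauchySeq_of_le_tendsto_0 (fun N => √(4 * (L ^ 2 - δ N ^ 2))) (fun n m N hn hm => ?_) ?_
  · rw [dist_eq_norm, ← Real.sqrt_sq (norm_nonneg _)]
    exact Real.sqrt_le_sqrt (hsq N n m hn hm)
  · have hδ : Tendsto δ atTop (𝓝 L) := tendsto_atTop_ciSup hδmono hδbdd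
    have h := (((tendsto_const_nhds (x := L ^ 2)).sub (hδ.pow 2)).const_mul 4).sqrt
    rwa [sub_self, mul_zero, Real.sqrt_zero] at h

variable [CompleteSpace H]

lemma exists_mem_forall_norm_le_of_isClosed_convex {K : Set H} (hne : K.Nonempty) (hK : IsClosed K)
    (hconv : Convex ℝ K) : ∃ v ∈ K, ∀ w ∈ K, ‖v‖ ≤ ‖w‖ := by
  obtain ⟨v, hvK, hv⟩ := exists_norm_eq_iInf_of_complete_convex hne hK.isComplete hconv 0
  refine ⟨v, hvK, fun w hw => ?_⟩
  simp only [zero_sub, norm_neg] at hv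
  simpa [hv] using ciInf_le ⟨0, forall_mem_range.2 fun w : K => norm_nonneg (0 - (w : H))⟩
    (⟨w, hw⟩ : K)

lemma exists_forall_mem_closure_convexHull_tailSet {x : ℕ → H} {C : ℝ} (hC : ∀ n, ‖x n‖ ≤ C) :
    ∃ z, ∀ n, z ∈ closure (convexHull ℝ (tailSet x n)) := by
  set S : ℕ → Set H := fun n => closure (convexHull ℝ (tailSet x n))
  have hxS : ∀ n, x n ∈ S n := fun n =>
    subset_closure (subset_convexHull ℝ _ (mem_tailSet_self x n))
  have hanti : Antitone S := fun _ _ h => closure_mono (convexHull_mono (tailSet_antitone x h))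
  choose y hyS hmin using fun n =>
    exists_mem_forall_norm_le_of_isClosed_convex ⟨x n, hxS n⟩ isClosed_closure
      (convex_convexHull ℝ _).closure
  have hcauchy := cauchySeq_of_antitone_of_forall_norm_le (fun n => (convex_convexHull ℝ _).closure)
    hanti hyS hmin (fun n => (hmin n _ (hxS n)).trans (hC n))
  obtain ⟨z, hz⟩ := cauchySeq_tendsto_of_complete hcauchy
  exact ⟨z, fun n => isClosed_closure.mem_of_tendsto hz
    (eventually_atTop.2 ⟨n, fun m hm => hanti hm (hyS m)⟩)⟩

theorem exists_tendsto_of_mem_convexHull_tailSet {x : ℕ → H} {C : ℝ} (hC : ∀ n, ‖x n‖ ≤ C) :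
    ∃ c : ℕ → H, (∀ n, c n ∈ convexHull ℝ (tailSet x n)) ∧ ∃ z, Tendsto c atTop (𝓝 z) := by
  obtain ⟨z, hz⟩ := exists_forall_mem_closure_convexHull_tailSet hC
  choose c hc hcz using fun n =>
    Metric.mem_closure_iff.1 (hz n) (1 / (n + 1)) Nat.one_div_pos_of_nat
  refine ⟨c, hc, z, tendsto_iff_dist_tendsto_zero.2 ?_⟩
  exact squeeze_zero (fun _ => dist_nonneg) (fun n => (dist_comm _ _).trans_le (hcz n).le)
    tendsto_one_div_add_atTop_nhds_zero_nat

end Hilbert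

lemma exists_absolutelyContinuous_eLpNorm_le {Ω E : Type*} [MeasurableSpace Ω]
    [NormedAddCommGroup E] [MeasurableSpace E] [OpensMeasurableSpace E] {μ : Measure Ω}
    [IsFiniteMeasure μ] {ζ : ℕ → Ω → E}
    (hζ : ∀ n, Measurable (ζ n)) (hbdd : ∀ᵐ ω ∂μ, ∃ M : ℝ, ∀ n, ‖ζ n ω‖ ≤ M) :
    ∃ ν : Measure Ω, μ ≪ ν ∧ ∀ n, eLpNorm (ζ n) 2 ν ≤ μ univ ^ (1 / 2 : ℝ) := by
  set S : Ω → ℝ≥0∞ := fun ω => ⨆ n, ‖ζ n ω‖ₑ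
  set w : Ω → ℝ≥0∞ := fun ω => (1 + S ω)⁻¹ ^ 2
  have hw : Measurable w := by
    have hS : Measurable S := Measurable.iSup fun n => (hζ n).enorm
    exact ((measurable_const.add hS).inv).pow_const 2
  have hw0 : ∀ᵐ ω ∂μ, w ω ≠ 0 := by
    filter_upwards [hbdd] with ω ⟨M, hM⟩
    have hS : S ω ≠ ∞ := ne_top_of_le_ne_top ENNReal.ofReal_ne_top <| iSup_le fun n =>
      (ofReal_norm _).symm.trans_le (ENNReal.ofReal_le_ofReal (hM n))
    exact pow_ne_zero 2 (ENNReal.inv_ne_zero.2 (ENNReal.add_ne_top.2 ⟨ENNReal.one_ne_top, hS⟩))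
  refine ⟨μ.withDensity w, withDensity_absolutelyContinuous' hw.aemeasurable hw0, fun n => ?_⟩
  rw [eLpNorm_eq_lintegral_rpow_enorm_toReal two_ne_zero ENNReal.ofNat_ne_top,
    ENNReal.toReal_ofNat, lintegral_withDensity_eq_lintegral_mul _ hw ((hζ n).enorm.pow_const _)]
  refine ENNReal.rpow_le_rpow ((lintegral_mono fun ω => ?_).trans_eq lintegral_one) (by norm_num)
  simp only [Pi.mul_apply, ENNReal.rpow_two, w, ← mul_pow]
  refine pow_le_one₀ zero_le ?_
  calc (1 + S ω)⁻¹ * ‖ζ n ω‖ₑ ≤ (1 + S ω)⁻¹ * (1 + S ω) := by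
        gcongr
        exact (le_iSup (fun k => ‖ζ k ω‖ₑ) n).trans le_add_self
    _ ≤ 1 := ENNReal.inv_mul_le_one _

section ForwardConvexCombinations

variable {Ω E F : Type*} [MeasurableSpace Ω]

def HasConvergentForwardConvexCombinations [NormedAddCommGroup E] [NormedSpace ℝ E]
    [MeasurableSpace E] (μ : Measure Ω) (ξ : ℕ → Ω → E) : Prop :=
  ∃ (η : ℕ → Ω → E) (ηlim : Ω → E),
    (∀ n, Measurable (η n)) ∧ Measurable ηlim ∧
    (∀ n ω, η n ω ∈ convexHull ℝ (tailSet (fun k => ξ k ω) n)) ∧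
    ∀ᵐ ω ∂μ, Tendsto (fun n => η n ω) atTop (𝓝 (ηlim ω))

variable [NormedAddCommGroup E] [NormedSpace ℝ E] [MeasurableSpace E] {μ ν : Measure Ω}
  {ξ : ℕ → Ω → E}

lemma HasConvergentForwardConvexCombinations.mono_ac
    (h : HasConvergentForwardConvexCombinations ν ξ) (hμν : μ ≪ ν) :
    HasConvergentForwardConvexCombinations μ ξ := by
  obtain ⟨η, ηlim, hη, hηlim, hhull, hlim⟩ := h
  exact ⟨η, ηlim, hη, hηlim, hhull, hμν.ae_le hlim⟩

variable [BorelSpace E] [NormedAddCommGroup F] [NormedSpace ℝ F] [MeasurableSpace F]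
  [BorelSpace F]

lemma HasConvergentForwardConvexCombinations.continuousLinearMap_comp
    (h : HasConvergentForwardConvexCombinations μ ξ) (L : E →L[ℝ] F) :
    HasConvergentForwardConvexCombinations μ (fun n ω => L (ξ n ω)) := by
  obtain ⟨η, ηlim, hη, hηlim, hhull, hlim⟩ := h
  refine ⟨fun n ω => L (η n ω), fun ω => L (ηlim ω), fun n => L.measurable.comp (hη n),
    L.measurable.comp hηlim, fun n ω => ?_, ?_⟩
  · have hmem := mem_image_of_mem L (hhull n ω)
    rwa [← L.coe_coe, LinearMap.image_convexHull, image_tailSet] at hmem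
  · filter_upwards [hlim] with ω hω
    exact (L.continuous.tendsto _).comp hω

lemma exists_measurable_forall_mem_convexHull_tailSet_ae_eq [SecondCountableTopology E]
    {p : ℝ≥0∞} [Fact (1 ≤ p)] (hξ : ∀ n, Measurable (ξ n)) {X : ℕ → Lp E p μ}
    (hX : ∀ n, X n =ᵐ[μ] ξ n) {n : ℕ} {c : Lp E p μ} (hc : c ∈ convexHull ℝ (tailSet X n)) :
    ∃ g : Ω → E, Measurable g ∧ (∀ ω, g ω ∈ convexHull ℝ (tailSet (fun k => ξ k ω) n)) ∧
      g =ᵐ[μ] c := by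
  obtain ⟨ι, _, w, z, hw0, hw1, hz, rfl⟩ := mem_convexHull_iff_exists_fintype.1 hc
  choose κ hκn hκ using hz
  refine ⟨fun ω => ∑ i, w i • ξ (κ i) ω, Finset.measurable_sum _ fun i _ => (hξ (κ i)).const_smul _,
    fun ω => (convex_convexHull ℝ _).sum_mem (fun i _ => hw0 i) hw1
      fun i _ => subset_convexHull ℝ _ ⟨κ i, hκn i, rfl⟩, ?_⟩
  have hsmul : ∀ᵐ ω ∂μ, ∀ i, (w i • z i : Lp E p μ) ω = w i • ξ (κ i) ω := by
    refine ae_all_iff.2 fun i => ?_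
    filter_upwards [Lp.coeFn_smul (w i) (z i), hX (κ i)] with ω hsm hzi
    rw [hsm, Pi.smul_apply, hκ i, hzi]
  filter_upwards [Lp.coeFn_fun_finsetSum Finset.univ (fun i => w i • z i), hsmul] with ω hsum hsm
  simp only [hsum, hsm]

theorem hasConvergentForwardConvexCombinations_of_eLpNorm_le {H : Type*}
    [NormedAddCommGroup H] [InnerProductSpace ℝ H] [CompleteSpace H] [MeasurableSpace H]
    [BorelSpace H] [SecondCountableTopology H] {ζ : ℕ → Ω → H} (hζ : ∀ n, Measurable (ζ n))
    {C : ℝ≥0∞} (hC : C ≠ ∞) (hbdd : ∀ n, eLpNorm (ζ n) 2 μ ≤ C) :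
    HasConvergentForwardConvexCombinations μ ζ := by
  have hmem : ∀ n, MemLp (ζ n) 2 μ := fun n =>
    ⟨(hζ n).aestronglyMeasurable, (hbdd n).trans_lt hC.lt_top⟩
  set X : ℕ → Lp H 2 μ := fun n => (hmem n).toLp (ζ n)
  have hXnorm : ∀ n, ‖X n‖ ≤ C.toReal := fun n =>
    (Lp.norm_toLp _ _).trans_le (ENNReal.toReal_mono hC (hbdd n))
  obtain ⟨c, hc, y, hcy⟩ := exists_tendsto_of_mem_convexHull_tailSet hXnorm
  obtain ⟨ns, hns, hns_ae⟩ := (tendstoInMeasure_of_tendsto_Lp hcy).exists_seq_tendsto_ae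
  choose g hg hghull hgc using fun n =>
    exists_measurable_forall_mem_convexHull_tailSet_ae_eq hζ (fun k => (hmem k).coeFn_toLp) (hc n)
  refine ⟨fun n => g (ns n), y, fun n => hg (ns n), (Lp.stronglyMeasurable y).measurable,
    fun n ω => convexHull_mono (tailSet_antitone _ hns.le_apply) (hghull (ns n) ω), ?_⟩
  filter_upwards [hns_ae, ae_all_iff.2 hgc] with ω hω hgω
  exact hω.congr fun n => (hgω (ns n)).symm

theorem hasConvergentForwardConvexCombinations_of_ae_bounded {H : Type*}
    [NormedAddCommGroup H] [InnerProductSpace ℝ H] [CompleteSpace H] [MeasurableSpace H]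
    [BorelSpace H] [SecondCountableTopology H] [IsFiniteMeasure μ] {ζ : ℕ → Ω → H}
    (hζ : ∀ n, Measurable (ζ n)) (hbdd : ∀ᵐ ω ∂μ, ∃ M : ℝ, ∀ n, ‖ζ n ω‖ ≤ M) :
    HasConvergentForwardConvexCombinations μ ζ := by
  obtain ⟨ν, hμν, hν⟩ := exists_absolutelyContinuous_eLpNorm_le hζ hbdd
  exact (hasConvergentForwardConvexCombinations_of_eLpNorm_le hζ
    (ENNReal.rpow_ne_top_of_nonneg (by norm_num) (measure_ne_top μ univ)) hν).mono_ac hμν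

theorem hasConvergentForwardConvexCombinations_of_ae_bounded_of_finiteDimensional
    [FiniteDimensional ℝ E] [IsFiniteMeasure μ] (hξ : ∀ n, Measurable (ξ n))
    (hbdd : ∀ᵐ ω ∂μ, ∃ M : ℝ, ∀ n, ‖ξ n ω‖ ≤ M) :
    HasConvergentForwardConvexCombinations μ ξ := by
  let e := toEuclidean (E := E)
  have h := hasConvergentForwardConvexCombinations_of_ae_bounded (μ := μ)
    (fun n => e.continuous.measurable.comp (hξ n)) <| by
      filter_upwards [hbdd] with ω ⟨M, hM⟩
      exact ⟨‖e.toContinuousLinearMap‖ * M, fun n =>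
        (e.toContinuousLinearMap.le_opNorm _).trans
          (mul_le_mul_of_nonneg_left (hM n) (norm_nonneg _))⟩
  simpa using h.continuousLinearMap_comp (e.symm : _ →L[ℝ] E)

end ForwardConvexCombinations

theorem stmt0 {Ω : Type*} [MeasurableSpace Ω] (P : Measure Ω) [IsProbabilityMeasure P]
    (d : ℕ) (ξ : ℕ → Ω → (Fin d → ℝ)) (hmeas : ∀ n, Measurable (ξ n))
    (hbdd : ∀ᵐ ω ∂P, ∃ M : ℝ, ∀ n, ‖ξ n ω‖ ≤ M) :
    ∃ (η : ℕ → Ω → (Fin d → ℝ)) (ηlim : Ω → (Fin d → ℝ)),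
      (∀ n, Measurable (η n)) ∧ Measurable ηlim ∧
      (∀ n ω, η n ω ∈ convexHull ℝ {x | ∃ k, n ≤ k ∧ x = ξ k ω}) ∧
      ∀ᵐ ω ∂P, Tendsto (fun n => η n ω) atTop (nhds (ηlim ω)) :=
  hasConvergentForwardConvexCombinations_of_ae_bounded_of_finiteDimensional hmeas hbdd
end

section
/- Let H ≥ 0 be an integrable random variable under every measure in a nonempty family P* of probability measures, and for α ∈ (0,1) let u(α) = inf{ sup_{Q ∈ P*} E_Q[H 1_A] : A ∈ F, P(A) ≥ α }. Then u(α) is nondecreasing in α, bounded above by sup_{Q ∈ P*} E_Q[H], and u(α) → sup_{Q ∈ P*} E_Q[H] as α ↑ 1. -/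
open MeasureTheory Filter Set

open scoped ENNReal Topology

/-!
Taking `A = Ω` shows `u α ≤ sup_Q E_Q[H]`, and shrinking the constraint `P(A) ≥ α` shows
monotonicity. For the limit, fix `Q ∈ P*` with `E_Q[H] > b`. The finite measure `H · Q` is
absolutely continuous with respect to `P`, so in the `ε`-`δ` sense `E_Q[H 1_{Aᶜ}]` is small
as soon as `P(Aᶜ) ≤ 1 - α` is; hence every admissible `A` has `E_Q[H 1_A] > b` for `α` close
to `1`.
-/

section AbsoluteContinuity

variable {Ω : Type*} [MeasurableSpace Ω] {μ ν : Measure Ω}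

theorem MeasureTheory.Measure.AbsolutelyContinuous.exists_pos_forall_measure_lt
    [IsFiniteMeasure ν] [SigmaFinite μ] (hνμ : ν ≪ μ) {ε : ℝ≥0∞} (hε : ε ≠ 0) :
    ∃ δ > 0, ∀ s, μ s < δ → ν s < ε := by
  obtain ⟨δ, hδ, hsmall⟩ :=
    exists_pos_setLIntegral_lt_of_measure_lt (Measure.lintegral_rnDeriv_lt_top ν μ).ne hε
  exact ⟨δ, hδ, fun s hs => Measure.setLIntegral_rnDeriv hνμ s ▸ hsmall s hs⟩

theorem MeasureTheory.exists_pos_forall_setIntegral_lt {f : Ω → ℝ} (hf : Integrable f ν)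
    (hf₀ : 0 ≤ᵐ[ν] f) [SigmaFinite μ] (hνμ : ν ≪ μ) {ε : ℝ} (hε : 0 < ε) :
    ∃ δ > 0, ∀ s, MeasurableSet s → μ s < δ → ∫ x in s, f x ∂ν < ε := by
  have : IsFiniteMeasure (ν.withDensity fun x => ENNReal.ofReal (f x)) :=
    isFiniteMeasure_withDensity_ofReal hf.2
  have hac : (ν.withDensity fun x => ENNReal.ofReal (f x)) ≪ μ :=
    (withDensity_absolutelyContinuous ν _).trans hνμ
  obtain ⟨δ, hδ, hsmall⟩ := hac.exists_pos_forall_measure_lt (ENNReal.ofReal_pos.2 hε).ne'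
  refine ⟨δ, hδ, fun s hs hμs => ?_⟩
  rw [integral_eq_lintegral_of_nonneg_ae (ae_restrict_of_ae hf₀) hf.1.restrict,
    ← withDensity_apply _ hs]
  exact ENNReal.toReal_lt_of_lt_ofReal (hsmall s hμs)

end AbsoluteContinuity

theorem MeasureTheory.prob_compl_le_ofReal_one_sub {Ω : Type*} [MeasurableSpace Ω]
    {P : Measure Ω} [IsProbabilityMeasure P] {A : Set Ω} (hA : MeasurableSet A) {a : ℝ}
    (ha : ENNReal.ofReal a ≤ P A) : P Aᶜ ≤ ENNReal.ofReal (1 - a) := by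
  rw [prob_compl_eq_one_sub hA, tsub_le_iff_right]
  calc (1 : ℝ≥0∞) = ENNReal.ofReal (1 - a + a) := by simp
    _ ≤ ENNReal.ofReal (1 - a) + ENNReal.ofReal a := ENNReal.ofReal_add_le
    _ ≤ ENNReal.ofReal (1 - a) + P A := by gcongr

section QuantileCost

variable {Ω : Type*} [MeasurableSpace Ω] (P : Measure Ω) (𝒬 : Set (Measure Ω)) (H : Ω → ℝ)

def setIntegrals (A : Set Ω) : Set ℝ := {s : ℝ | ∃ Q ∈ 𝒬, s = ∫ ω in A, H ω ∂Q}

noncomputable def supSetIntegral (A : Set Ω) : ℝ := sSup (setIntegrals 𝒬 H A)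

noncomputable def quantileCost (a : ℝ) : ℝ :=
  sInf {r : ℝ | ∃ A : Set Ω, MeasurableSet A ∧ ENNReal.ofReal a ≤ P A ∧ r = supSetIntegral 𝒬 H A}

variable {P 𝒬 H}

theorem setIntegrals_nonempty (h𝒬 : 𝒬.Nonempty) (A : Set Ω) : (setIntegrals 𝒬 H A).Nonempty :=
  let ⟨Q, hQ⟩ := h𝒬
  ⟨_, Q, hQ, rfl⟩

theorem bddAbove_setIntegrals (hH₀ : 0 ≤ H) (hint : ∀ Q ∈ 𝒬, Integrable H Q)
    (hbdd : BddAbove (setIntegrals 𝒬 H univ)) (A : Set Ω) : BddAbove (setIntegrals 𝒬 H A) := by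
  obtain ⟨S, hS⟩ := hbdd
  refine ⟨S, ?_⟩
  rintro _ ⟨Q, hQ, rfl⟩
  exact (setIntegral_le_integral (hint Q hQ) (.of_forall hH₀)).trans
    (hS ⟨Q, hQ, setIntegral_univ.symm⟩)

theorem setIntegral_le_supSetIntegral (hH₀ : 0 ≤ H) (hint : ∀ Q ∈ 𝒬, Integrable H Q)
    (hbdd : BddAbove (setIntegrals 𝒬 H univ)) {Q : Measure Ω} (hQ : Q ∈ 𝒬) (A : Set Ω) :
    ∫ ω in A, H ω ∂Q ≤ supSetIntegral 𝒬 H A :=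
  le_csSup (bddAbove_setIntegrals hH₀ hint hbdd A) ⟨Q, hQ, rfl⟩

theorem supSetIntegral_nonneg (hH₀ : 0 ≤ H) (A : Set Ω) : 0 ≤ supSetIntegral 𝒬 H A :=
  Real.sSup_nonneg fun _ ⟨_, _, hs⟩ => hs ▸ setIntegral_nonneg_of_ae (.of_forall hH₀)

theorem quantileCost_le_supSetIntegral_univ [IsProbabilityMeasure P] (hH₀ : 0 ≤ H) {a : ℝ}
    (ha : a ≤ 1) : quantileCost P 𝒬 H a ≤ supSetIntegral 𝒬 H univ :=
  csInf_le ⟨0, fun _ ⟨A, _, _, hr⟩ => hr ▸ supSetIntegral_nonneg hH₀ A⟩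
    ⟨univ, .univ, by simpa using ha, rfl⟩

theorem monotoneOn_quantileCost [IsProbabilityMeasure P] (hH₀ : 0 ≤ H) :
    MonotoneOn (quantileCost P 𝒬 H) (Iic 1) := by
  intro a _ b hb hab
  refine csInf_le_csInf ⟨0, fun _ ⟨A, _, _, hr⟩ => hr ▸ supSetIntegral_nonneg hH₀ A⟩
    ⟨_, univ, .univ, by simpa using hb, rfl⟩ ?_
  rintro _ ⟨A, hA, hPA, rfl⟩
  exact ⟨A, hA, (ENNReal.ofReal_le_ofReal hab).trans hPA, rfl⟩

theorem eventually_le_quantileCost [IsProbabilityMeasure P] (h𝒬 : 𝒬.Nonempty)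
    (hac : ∀ Q ∈ 𝒬, Q ≪ P) (hH₀ : 0 ≤ H) (hint : ∀ Q ∈ 𝒬, Integrable H Q)
    (hbdd : BddAbove (setIntegrals 𝒬 H univ)) {b : ℝ} (hb : b < supSetIntegral 𝒬 H univ) :
    ∀ᶠ a in 𝓝[<] 1, b ≤ quantileCost P 𝒬 H a := by
  obtain ⟨_, ⟨Q, hQ, rfl⟩, hbQ⟩ := exists_lt_of_lt_csSup (setIntegrals_nonempty h𝒬 univ) hb
  rw [setIntegral_univ] at hbQ
  obtain ⟨δ, hδ, hsmall⟩ := exists_pos_forall_setIntegral_lt (hint Q hQ) (.of_forall hH₀)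
    (hac Q hQ) (sub_pos.2 hbQ)
  have hclose : ∀ᶠ a in 𝓝 (1 : ℝ), ENNReal.ofReal (1 - a) < δ := by
    have : Tendsto (fun a : ℝ => ENNReal.ofReal (1 - a)) (𝓝 1) (𝓝 0) :=
      (ENNReal.continuous_ofReal.comp (continuous_const.sub continuous_id)).tendsto' 1 0
        (by simp)
    exact this.eventually (Iio_mem_nhds hδ)
  filter_upwards [nhdsWithin_le_nhds hclose, self_mem_nhdsWithin] with a ha ha₁
  refine le_csInf ⟨_, univ, .univ, by simpa using ha₁.out.le, rfl⟩ ?_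
  rintro _ ⟨A, hA, hPA, rfl⟩
  have hAc : ∫ ω in Aᶜ, H ω ∂Q < ∫ ω, H ω ∂Q - b :=
    hsmall Aᶜ hA.compl ((prob_compl_le_ofReal_one_sub hA hPA).trans_lt ha)
  have hsplit := integral_add_compl hA (hint Q hQ)
  calc b ≤ ∫ ω in A, H ω ∂Q := by linarith
    _ ≤ supSetIntegral 𝒬 H A := setIntegral_le_supSetIntegral hH₀ hint hbdd hQ A

theorem tendsto_quantileCost [IsProbabilityMeasure P] (h𝒬 : 𝒬.Nonempty)
    (hac : ∀ Q ∈ 𝒬, Q ≪ P) (hH₀ : 0 ≤ H) (hint : ∀ Q ∈ 𝒬, Integrable H Q)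
    (hbdd : BddAbove (setIntegrals 𝒬 H univ)) :
    Tendsto (quantileCost P 𝒬 H) (𝓝[<] 1) (𝓝 (supSetIntegral 𝒬 H univ)) := by
  refine tendsto_order.2 ⟨fun b hb => ?_, fun b hb => ?_⟩
  · obtain ⟨c, hbc, hc⟩ := exists_between hb
    filter_upwards [eventually_le_quantileCost h𝒬 hac hH₀ hint hbdd hc] with a ha
    exact hbc.trans_le ha
  · filter_upwards [self_mem_nhdsWithin] with a ha
    exact (quantileCost_le_supSetIntegral_univ hH₀ (le_of_lt ha)).trans_lt hb

end QuantileCost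

theorem stmt2_general {Ω : Type*} [MeasurableSpace Ω] (P : Measure Ω) [IsProbabilityMeasure P]
    (𝒬 : Set (Measure Ω)) (h𝒬ne : 𝒬.Nonempty)
    (hequiv : ∀ Q ∈ 𝒬, Q ≪ P ∧ P ≪ Q)
    (H : Ω → ℝ) (hHnn : ∀ ω, 0 ≤ H ω)
    (hint : ∀ Q ∈ 𝒬, Integrable H Q)
    (hbdd : BddAbove {r : ℝ | ∃ Q ∈ 𝒬, r = ∫ ω, H ω ∂Q})
    (S : ℝ) (hS : S = sSup {r : ℝ | ∃ Q ∈ 𝒬, r = ∫ ω, H ω ∂Q})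
    (u : ℝ → ℝ)
    (hu : ∀ a : ℝ, u a = sInf {r : ℝ | ∃ A : Set Ω, MeasurableSet A ∧
        ENNReal.ofReal a ≤ P A ∧ r = sSup {s : ℝ | ∃ Q ∈ 𝒬, s = ∫ ω in A, H ω ∂Q}}) :
    (∀ a b : ℝ, 0 < a → a ≤ b → b < 1 → u a ≤ u b) ∧
      (∀ a ∈ Set.Ioo (0 : ℝ) 1, u a ≤ S) ∧
      Tendsto u (nhdsWithin 1 (Set.Iio 1)) (nhds S) := by
  have hH₀ : 0 ≤ H := hHnn
  have hac : ∀ Q ∈ 𝒬, Q ≪ P := fun Q hQ => (hequiv Q hQ).1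
  have hunivs : setIntegrals 𝒬 H univ = {r : ℝ | ∃ Q ∈ 𝒬, r = ∫ ω, H ω ∂Q} := by
    simp only [setIntegrals, setIntegral_univ]
  rw [← hunivs] at hbdd hS
  obtain rfl : u = quantileCost P 𝒬 H := funext hu
  subst hS
  refine ⟨fun a b _ hab hb => ?_, fun a ha => ?_, ?_⟩
  · exact monotoneOn_quantileCost hH₀ (mem_Iic.2 (hab.trans hb.le)) (mem_Iic.2 hb.le) hab
  · exact quantileCost_le_supSetIntegral_univ hH₀ ha.2.le
  · exact tendsto_quantileCost h𝒬ne hac hH₀ hint hbdd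

theorem stmt2 {Ω : Type*} [MeasurableSpace Ω] (P : Measure Ω) [IsProbabilityMeasure P]
    (𝒬 : Set (Measure Ω)) (h𝒬ne : 𝒬.Nonempty)
    (h𝒬prob : ∀ Q ∈ 𝒬, IsProbabilityMeasure Q)
    (hequiv : ∀ Q ∈ 𝒬, Q ≪ P ∧ P ≪ Q)
    (H : Ω → ℝ) (hH : Measurable H) (hHnn : ∀ ω, 0 ≤ H ω)
    (hint : ∀ Q ∈ 𝒬, Integrable H Q)
    (hbdd : BddAbove {r : ℝ | ∃ Q ∈ 𝒬, r = ∫ ω, H ω ∂Q})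
    (S : ℝ) (hS : S = sSup {r : ℝ | ∃ Q ∈ 𝒬, r = ∫ ω, H ω ∂Q})
    (u : ℝ → ℝ)
    (hu : ∀ a : ℝ, u a = sInf {r : ℝ | ∃ A : Set Ω, MeasurableSet A ∧
        ENNReal.ofReal a ≤ P A ∧ r = sSup {s : ℝ | ∃ Q ∈ 𝒬, s = ∫ ω in A, H ω ∂Q}}) :
    (∀ a b : ℝ, 0 < a → a ≤ b → b < 1 → u a ≤ u b) ∧
      (∀ a ∈ Set.Ioo (0 : ℝ) 1, u a ≤ S) ∧
      Tendsto u (nhdsWithin 1 (Set.Iio 1)) (nhds S) :=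
  stmt2_general P 𝒬 h𝒬ne hequiv H hHnn hint hbdd S hS u hu
end

section
/- Let R^α = {φ : Ω → [0,1] measurable : E_P[φ] ≥ α} for α ∈ (0,1), and let H ≥ 0 satisfy sup_{Q ∈ P*} E_Q[H] < ∞ for a nonempty family P* of probability measures equivalent to P. Then there exists φ̃ ∈ R^α with E_P[φ̃] = α such that inf_{φ ∈ R^α} sup_{Q ∈ P*} E_Q[H φ] = sup_{Q ∈ P*} E_Q[H φ̃]. -/
open MeasureTheory Filter Set Topology

/-!
The objective `φ ↦ sup_{Q ∈ 𝒬} E_Q[H φ]` is convex, and lower semicontinuous along `P`-a.s.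
convergent sequences of tests by dominated convergence (each `Q ≪ P` and `H` is `Q`-integrable).
So the sublevel sets of the objective on `R^α`, at levels decreasing to its infimum, are nested,
nonempty, closed, convex and bounded in `L²(P)`; by the parallelogram law such sets have a common
point, which is a minimizer. Multiplying a minimizer `φ` by `α / E_P[φ] ≤ 1` keeps it in `R^α`,
makes its mean exactly `α`, and does not increase the objective since `H ≥ 0`.
-/

section Hilbert

variable {E : Type*} [NormedAddCommGroup E] [InnerProductSpace ℝ E]

theorem norm_sub_sq_le_of_norm_le_midpoint {v w : E}
    (h : ‖v‖ ≤ ‖(1 / 2 : ℝ) • v + (1 / 2 : ℝ) • w‖) :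
    ‖v - w‖ ^ 2 ≤ 2 * (‖w‖ ^ 2 - ‖v‖ ^ 2) := by
  have hmid : ‖(1 / 2 : ℝ) • v + (1 / 2 : ℝ) • w‖ = ‖v + w‖ / 2 := by
    rw [← smul_add, norm_smul, Real.norm_of_nonneg (by norm_num)]; ring
  have hsum : 4 * ‖v‖ ^ 2 ≤ ‖v + w‖ ^ 2 := by
    rw [hmid] at h; nlinarith [norm_nonneg v]
  linarith [parallelogram_law_with_norm ℝ v w]

theorem exists_norm_le_of_isClosed_of_convex [CompleteSpace E] {K : Set E} (hne : K.Nonempty)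
    (hclosed : IsClosed K) (hconv : Convex ℝ K) : ∃ v ∈ K, ∀ w ∈ K, ‖v‖ ≤ ‖w‖ := by
  obtain ⟨v, hvK, hv⟩ := exists_norm_eq_iInf_of_complete_convex hne hclosed.isComplete hconv 0
  refine ⟨v, hvK, fun w hw => ?_⟩
  have hbdd : BddBelow (range fun w : K => ‖0 - (w : E)‖) := ⟨0, by rintro _ ⟨_, rfl⟩; positivity⟩
  have := ciInf_le hbdd ⟨w, hw⟩
  rwa [← hv, zero_sub, zero_sub, norm_neg, norm_neg] at this

/-- The minimal-norm points of the sets form a Cauchy sequence, by the parallelogram law. -/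
theorem nonempty_iInter_of_antitone_of_convex [CompleteSpace E] {K : ℕ → Set E} (hK : Antitone K)
    (hne : ∀ n, (K n).Nonempty) (hclosed : ∀ n, IsClosed (K n)) (hconv : ∀ n, Convex ℝ (K n))
    (hbdd : Bornology.IsBounded (K 0)) : (⋂ n, K n).Nonempty := by
  choose ψ hψK hψmin using fun n =>
    exists_norm_le_of_isClosed_of_convex (hne n) (hclosed n) (hconv n)
  have hstep : ∀ {n m}, n ≤ m → ‖ψ n - ψ m‖ ^ 2 ≤ 2 * (‖ψ m‖ ^ 2 - ‖ψ n‖ ^ 2) := fun hnm =>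
    norm_sub_sq_le_of_norm_le_midpoint <| hψmin _ _ <|
      hconv _ (hψK _) (hK hnm (hψK _)) (by norm_num) (by norm_num) (by norm_num)
  have hmono : Monotone fun n => ‖ψ n‖ ^ 2 := fun n m hnm => by
    linarith [hstep hnm, sq_nonneg ‖ψ n - ψ m‖]
  obtain ⟨C, hC⟩ := isBounded_iff_forall_norm_le.1 hbdd
  have hbddAbove : BddAbove (range fun n => ‖ψ n‖ ^ 2) := ⟨C ^ 2, by
    rintro _ ⟨n, rfl⟩
    exact pow_le_pow_left₀ (norm_nonneg _) (hC _ (hK (Nat.zero_le n) (hψK n))) 2⟩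
  set L := ⨆ n, ‖ψ n‖ ^ 2
  have hdist : ∀ n m N, N ≤ n → N ≤ m → dist (ψ n) (ψ m) ≤ √(2 * (L - ‖ψ N‖ ^ 2)) := by
    have key : ∀ n m N, N ≤ n → n ≤ m → dist (ψ n) (ψ m) ≤ √(2 * (L - ‖ψ N‖ ^ 2)) := by
      intro n m N hNn hnm
      rw [dist_eq_norm, Real.le_sqrt (norm_nonneg _)
        (by linarith [le_ciSup hbddAbove N])]
      linarith [hstep hnm, hmono hNn, le_ciSup hbddAbove m]
    intro n m N hNn hNm
    rcases le_total n m with hnm | hmn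
    · exact key n m N hNn hnm
    · rw [dist_comm]; exact key m n N hNm hmn
  have hlim : Tendsto (fun N => √(2 * (L - ‖ψ N‖ ^ 2))) atTop (𝓝 0) := by
    have := ((tendsto_atTop_ciSup hmono hbddAbove).const_sub L).const_mul 2 |>.sqrt
    rwa [sub_self, mul_zero, Real.sqrt_zero] at this
  obtain ⟨g, hg⟩ := cauchySeq_tendsto_of_complete (cauchySeq_of_le_tendsto_0 _ hdist hlim)
  exact ⟨g, mem_iInter.2 fun n => (hclosed n).mem_of_tendsto hg
    (eventually_atTop.2 ⟨n, fun m hm => hK hm (hψK m)⟩)⟩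

end Hilbert

section RandomizedTests

variable {Ω : Type*} [MeasurableSpace Ω]

def IsRandomizedTest (φ : Ω → ℝ) : Prop := Measurable φ ∧ ∀ ω, φ ω ∈ Icc (0 : ℝ) 1

namespace IsRandomizedTest

variable {φ : Ω → ℝ} {μ : Measure Ω}

theorem norm_le_one (hφ : IsRandomizedTest φ) (ω : Ω) : ‖φ ω‖ ≤ 1 := by
  rw [Real.norm_of_nonneg (hφ.2 ω).1]; exact (hφ.2 ω).2

theorem integrable_mul {h : Ω → ℝ} (hφ : IsRandomizedTest φ) (hh : Integrable h μ) :
    Integrable (fun ω => h ω * φ ω) μ :=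
  hh.mul_bdd hφ.1.aestronglyMeasurable (Eventually.of_forall hφ.norm_le_one)

theorem integrable [IsFiniteMeasure μ] (hφ : IsRandomizedTest φ) : Integrable φ μ :=
  .of_bound hφ.1.aestronglyMeasurable 1 (Eventually.of_forall hφ.norm_le_one)

theorem memLp [IsFiniteMeasure μ] {p : ENNReal} (hφ : IsRandomizedTest φ) : MemLp φ p μ :=
  .of_bound hφ.1.aestronglyMeasurable 1 (Eventually.of_forall hφ.norm_le_one)

theorem const_mul (hφ : IsRandomizedTest φ) {c : ℝ} (hc : c ∈ Icc (0 : ℝ) 1) :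
    IsRandomizedTest fun ω => c * φ ω :=
  ⟨hφ.1.const_mul c, fun ω =>
    ⟨mul_nonneg hc.1 (hφ.2 ω).1, mul_le_one₀ hc.2 (hφ.2 ω).1 (hφ.2 ω).2⟩⟩

end IsRandomizedTest

theorem convex_setOf_isRandomizedTest : Convex ℝ {φ : Ω → ℝ | IsRandomizedTest φ} :=
  fun _ hφ _ hψ _ _ ha hb hab =>
    ⟨(hφ.1.const_smul _).add (hψ.1.const_smul _),
      fun ω => convex_Icc 0 1 (hφ.2 ω) (hψ.2 ω) ha hb hab⟩

theorem tendsto_integral_mul_of_ae_tendsto {μ : Measure Ω} {h : Ω → ℝ} (hh : Integrable h μ)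
    {φ : ℕ → Ω → ℝ} {φlim : Ω → ℝ} (hφ : ∀ k, IsRandomizedTest (φ k))
    (hlim : ∀ᵐ ω ∂μ, Tendsto (fun k => φ k ω) atTop (𝓝 (φlim ω))) :
    Tendsto (fun k => ∫ ω, h ω * φ k ω ∂μ) atTop (𝓝 (∫ ω, h ω * φlim ω ∂μ)) := by
  refine tendsto_integral_of_dominated_convergence (fun ω => ‖h ω‖)
    (fun k => (hφ k).integrable_mul hh |>.aestronglyMeasurable) hh.norm
    (fun k => Eventually.of_forall fun ω => ?_) (hlim.mono fun ω hω => hω.const_mul (h ω))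
  rw [norm_mul]
  exact mul_le_of_le_one_right (norm_nonneg _) ((hφ k).norm_le_one ω)

theorem exists_isRandomizedTest_of_tendsto_Lp {p : ENNReal} [Fact (1 ≤ p)] {P : Measure Ω}
    {u : ℕ → Lp ℝ p P} {g : Lp ℝ p P} (hg : Tendsto u atTop (𝓝 g)) {φ : ℕ → Ω → ℝ}
    (hφ : ∀ k, IsRandomizedTest (φ k)) (hu : ∀ k, u k =ᵐ[P] φ k) :
    ∃ ψ, IsRandomizedTest ψ ∧ g =ᵐ[P] ψ ∧
      ∃ ns : ℕ → ℕ, ∀ᵐ ω ∂P, Tendsto (fun i => φ (ns i) ω) atTop (𝓝 (ψ ω)) := by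
  obtain ⟨ns, -, hns⟩ := (tendstoInMeasure_of_tendsto_Lp hg).exists_seq_tendsto_ae
  have hgm := Lp.aestronglyMeasurable g
  -- clamping to `[0, 1]` changes the representative only off the a.s. convergence set
  set ψ : Ω → ℝ := fun ω => max 0 (min 1 (hgm.mk g ω))
  have hψ : IsRandomizedTest ψ :=
    ⟨measurable_const.max (measurable_const.min hgm.stronglyMeasurable_mk.measurable),
      fun ω => ⟨le_max_left _ _, max_le zero_le_one (min_le_left _ _)⟩⟩
  have hlim : ∀ᵐ ω ∂P, Tendsto (fun i => φ (ns i) ω) atTop (𝓝 (g ω)) ∧ g ω = ψ ω := by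
    filter_upwards [ae_all_iff.2 hu, hns, hgm.ae_eq_mk] with ω huω hnsω hmkω
    have hlimω : Tendsto (fun i => φ (ns i) ω) atTop (𝓝 (g ω)) :=
      hnsω.congr fun i => huω (ns i)
    have hmem : g ω ∈ Icc (0 : ℝ) 1 :=
      isClosed_Icc.mem_of_tendsto hlimω (Eventually.of_forall fun i => (hφ (ns i)).2 ω)
    refine ⟨hlimω, ?_⟩
    simp only [ψ, ← hmkω, min_eq_right hmem.2, max_eq_right hmem.1]
  exact ⟨ψ, hψ, hlim.mono fun ω hω => hω.2, ns, hlim.mono fun ω hω => hω.2 ▸ hω.1⟩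

end RandomizedTests

section LpClasses

variable {α E : Type*} [MeasurableSpace α] [NormedAddCommGroup E] {p : ENNReal} {μ : Measure α}

def aeClasses (p : ENNReal) (μ : Measure α) (S : Set (α → E)) : Set (Lp E p μ) :=
  {g | ∃ φ ∈ S, g =ᵐ[μ] φ}

theorem aeClasses_mono {S T : Set (α → E)} (h : S ⊆ T) : aeClasses p μ S ⊆ aeClasses p μ T :=
  fun _ ⟨φ, hφ, hg⟩ => ⟨φ, h hφ, hg⟩

theorem convex_aeClasses [NormedSpace ℝ E] [Fact (1 ≤ p)] {S : Set (α → E)} (hS : Convex ℝ S) :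
    Convex ℝ (aeClasses p μ S) := by
  rintro g ⟨φ, hφ, hgφ⟩ h ⟨ψ, hψ, hhψ⟩ a b ha hb hab
  refine ⟨a • φ + b • ψ, hS hφ hψ ha hb hab, ?_⟩
  filter_upwards [Lp.coeFn_add (a • g) (b • h), Lp.coeFn_smul a g, Lp.coeFn_smul b h, hgφ, hhψ]
    with ω h₁ h₂ h₃ h₄ h₅
  simp only [h₁, Pi.add_apply, h₂, h₃, Pi.smul_apply, h₄, h₅]

end LpClasses

section UpperExpectation

variable {Ω : Type*} [MeasurableSpace Ω] {𝒬 : Set (Measure Ω)}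

noncomputable def upperExpectation (𝒬 : Set (Measure Ω)) (f : Ω → ℝ) : ℝ :=
  sSup {s : ℝ | ∃ Q ∈ 𝒬, s = ∫ ω, f ω ∂Q}

theorem upperExpectation_le (h𝒬 : 𝒬.Nonempty) {f : Ω → ℝ} {b : ℝ}
    (h : ∀ Q ∈ 𝒬, ∫ ω, f ω ∂Q ≤ b) : upperExpectation 𝒬 f ≤ b := by
  obtain ⟨Q, hQ⟩ := h𝒬
  exact csSup_le ⟨_, Q, hQ, rfl⟩ fun _ ⟨Q, hQ, hs⟩ => hs ▸ h Q hQ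

variable {H φ : Ω → ℝ}

theorem integral_mul_le_integral_of_isRandomizedTest (hHnn : ∀ ω, 0 ≤ H ω) {Q : Measure Ω}
    (hint : Integrable H Q) (hφ : IsRandomizedTest φ) : ∫ ω, H ω * φ ω ∂Q ≤ ∫ ω, H ω ∂Q :=
  integral_mono (hφ.integrable_mul hint) hint fun ω =>
    mul_le_of_le_one_right (hHnn ω) (hφ.2 ω).2

theorem integral_mul_le_upperExpectation (hHnn : ∀ ω, 0 ≤ H ω)
    (hint : ∀ Q ∈ 𝒬, Integrable H Q) (hbdd : BddAbove {r : ℝ | ∃ Q ∈ 𝒬, r = ∫ ω, H ω ∂Q})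
    (hφ : IsRandomizedTest φ) {Q : Measure Ω} (hQ : Q ∈ 𝒬) :
    ∫ ω, H ω * φ ω ∂Q ≤ upperExpectation 𝒬 fun ω => H ω * φ ω := by
  refine le_csSup ⟨upperExpectation 𝒬 H, ?_⟩ ⟨Q, hQ, rfl⟩
  rintro _ ⟨Q', hQ', rfl⟩
  exact (integral_mul_le_integral_of_isRandomizedTest hHnn (hint Q' hQ') hφ).trans
    (le_csSup hbdd ⟨Q', hQ', rfl⟩)

theorem upperExpectation_mul_nonneg (h𝒬 : 𝒬.Nonempty) (hHnn : ∀ ω, 0 ≤ H ω)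
    (hint : ∀ Q ∈ 𝒬, Integrable H Q) (hbdd : BddAbove {r : ℝ | ∃ Q ∈ 𝒬, r = ∫ ω, H ω ∂Q})
    (hφ : IsRandomizedTest φ) : 0 ≤ upperExpectation 𝒬 fun ω => H ω * φ ω := by
  obtain ⟨Q, hQ⟩ := h𝒬
  exact (integral_nonneg fun ω => mul_nonneg (hHnn ω) (hφ.2 ω).1).trans
    (integral_mul_le_upperExpectation hHnn hint hbdd hφ hQ)

end UpperExpectation

section Sublevel

variable {Ω : Type*} [MeasurableSpace Ω] {P : Measure Ω} {𝒬 : Set (Measure Ω)} {H : Ω → ℝ}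
  {α : ℝ}

/-- The set `R^α` of the paper. -/
def testsOfMeanGE (P : Measure Ω) (α : ℝ) : Set (Ω → ℝ) :=
  {φ | IsRandomizedTest φ ∧ α ≤ ∫ ω, φ ω ∂P}

def sublevelTests (P : Measure Ω) (𝒬 : Set (Measure Ω)) (H : Ω → ℝ) (α b : ℝ) : Set (Ω → ℝ) :=
  {φ ∈ testsOfMeanGE P α | ∀ Q ∈ 𝒬, ∫ ω, H ω * φ ω ∂Q ≤ b}

theorem sublevelTests_mono {b c : ℝ} (hbc : b ≤ c) :
    sublevelTests P 𝒬 H α b ⊆ sublevelTests P 𝒬 H α c :=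
  fun _ ⟨hφ, hle⟩ => ⟨hφ, fun Q hQ => (hle Q hQ).trans hbc⟩

theorem convex_sublevelTests [IsFiniteMeasure P] (hint : ∀ Q ∈ 𝒬, Integrable H Q) (b : ℝ) :
    Convex ℝ (sublevelTests P 𝒬 H α b) := by
  rintro φ ⟨⟨hφ, hφα⟩, hφb⟩ ψ ⟨⟨hψ, hψα⟩, hψb⟩ a c ha hc hac
  refine ⟨⟨convex_setOf_isRandomizedTest hφ hψ ha hc hac, ?_⟩, fun Q hQ => ?_⟩
  · simp only [Pi.add_apply, Pi.smul_apply, smul_eq_mul]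
    rw [integral_add (hφ.integrable.const_mul a) (hψ.integrable.const_mul c),
      integral_const_mul, integral_const_mul]
    calc α = a * α + c * α := by rw [← add_mul, hac, one_mul]
      _ ≤ _ := by gcongr
  · have hφQ := hφ.integrable_mul (hint Q hQ)
    have hψQ := hψ.integrable_mul (hint Q hQ)
    simp only [Pi.add_apply, Pi.smul_apply, smul_eq_mul, mul_add, mul_left_comm (H _)]
    rw [integral_add (hφQ.const_mul a) (hψQ.const_mul c), integral_const_mul, integral_const_mul]
    calc _ ≤ a * b + c * b := by gcongr; exacts [hφb Q hQ, hψb Q hQ]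
      _ = b := by rw [← add_mul, hac, one_mul]

theorem isClosed_aeClasses_sublevelTests {p : ENNReal} [Fact (1 ≤ p)] [IsFiniteMeasure P]
    (hac : ∀ Q ∈ 𝒬, Q ≪ P) (hint : ∀ Q ∈ 𝒬, Integrable H Q) (b : ℝ) :
    IsClosed (aeClasses p P (sublevelTests P 𝒬 H α b)) := by
  refine IsSeqClosed.isClosed fun u g hu hg => ?_
  choose φ hφ hu using hu
  obtain ⟨ψ, hψ, hgψ, ns, hlim⟩ := exists_isRandomizedTest_of_tendsto_Lp hg (fun k => (hφ k).1.1) hu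
  have hmean := tendsto_integral_mul_of_ae_tendsto (integrable_const (1 : ℝ))
    (fun i => (hφ (ns i)).1.1) hlim
  simp only [one_mul] at hmean
  refine ⟨ψ, ⟨⟨hψ, ge_of_tendsto' hmean fun i => (hφ (ns i)).1.2⟩, fun Q hQ => ?_⟩, hgψ⟩
  exact le_of_tendsto' (tendsto_integral_mul_of_ae_tendsto (hint Q hQ)
      (fun i => (hφ (ns i)).1.1) ((hac Q hQ).ae_le hlim)) fun i => (hφ (ns i)).2 Q hQ

theorem isBounded_aeClasses_of_isRandomizedTest {p : ENNReal} [Fact (1 ≤ p)] [IsFiniteMeasure P]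
    {S : Set (Ω → ℝ)} (hS : ∀ φ ∈ S, IsRandomizedTest φ) :
    Bornology.IsBounded (aeClasses p P S) :=
  isBounded_iff_forall_norm_le.2 ⟨_, fun _ ⟨φ, hφ, hg⟩ => Lp.norm_le_of_ae_bound zero_le_one
    (hg.mono fun ω hω => hω ▸ (hS φ hφ).norm_le_one ω)⟩

end Sublevel

section Minimizer

variable {Ω : Type*} [MeasurableSpace Ω] {P : Measure Ω} {𝒬 : Set (Measure Ω)} {H : Ω → ℝ}
  {α : ℝ}

theorem exists_isMinOn_upperExpectation [IsProbabilityMeasure P] (h𝒬 : 𝒬.Nonempty)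
    (hac : ∀ Q ∈ 𝒬, Q ≪ P) (hHnn : ∀ ω, 0 ≤ H ω) (hint : ∀ Q ∈ 𝒬, Integrable H Q)
    (hbdd : BddAbove {r : ℝ | ∃ Q ∈ 𝒬, r = ∫ ω, H ω ∂Q}) (hα : α ≤ 1) :
    ∃ φ ∈ testsOfMeanGE P α, IsMinOn (fun φ => upperExpectation 𝒬 fun ω => H ω * φ ω)
      (testsOfMeanGE P α) φ := by
  set V := fun φ : Ω → ℝ => upperExpectation 𝒬 fun ω => H ω * φ ω
  set I := sInf (V '' testsOfMeanGE P α)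
  have hne : (testsOfMeanGE P α).Nonempty :=
    ⟨fun _ => 1, ⟨measurable_const, fun _ => ⟨zero_le_one, le_rfl⟩⟩, by simpa using hα⟩
  have hbddBelow : BddBelow (V '' testsOfMeanGE P α) :=
    ⟨0, forall_mem_image.2 fun φ hφ => upperExpectation_mul_nonneg h𝒬 hHnn hint hbdd hφ.1⟩
  set K := fun n : ℕ => aeClasses 2 P (sublevelTests P 𝒬 H α (I + 1 / (n + 1)))
  have hKne : ∀ n, (K n).Nonempty := by
    intro n
    obtain ⟨_, ⟨φ, hφ, rfl⟩, hlt⟩ := exists_lt_of_csInf_lt (hne.image V)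
      (lt_add_of_pos_right I (by positivity : (0 : ℝ) < 1 / (n + 1)))
    exact ⟨hφ.1.memLp.toLp φ, φ, ⟨hφ, fun Q hQ =>
      (integral_mul_le_upperExpectation hHnn hint hbdd hφ.1 hQ).trans hlt.le⟩, MemLp.coeFn_toLp _⟩
  have hK : Antitone K := fun n m hnm => aeClasses_mono <| sublevelTests_mono <| by gcongr
  obtain ⟨g, hg⟩ := nonempty_iInter_of_antitone_of_convex hK hKne
    (fun n => isClosed_aeClasses_sublevelTests hac hint _)
    (fun n => convex_aeClasses (convex_sublevelTests hint _))
    (isBounded_aeClasses_of_isRandomizedTest fun φ hφ => hφ.1.1)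
  choose φ hφ hgφ using mem_iInter.1 hg
  have hφI : V (φ 0) ≤ I := upperExpectation_le h𝒬 fun Q hQ => by
    have hlim := tendsto_one_div_add_atTop_nhds_zero_nat.const_add I
    rw [add_zero] at hlim
    refine ge_of_tendsto' hlim fun n => ?_
    have hae : φ 0 =ᵐ[Q] φ n := (hac Q hQ).ae_le ((hgφ 0).symm.trans (hgφ n))
    rw [integral_congr_ae (hae.mono fun ω hω => by rw [hω])]
    exact (hφ n).2 Q hQ
  exact ⟨φ 0, (hφ 0).1, fun ψ hψ => hφI.trans (csInf_le hbddBelow (mem_image_of_mem V hψ))⟩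

theorem exists_isMinOn_upperExpectation_integral_eq (h𝒬 : 𝒬.Nonempty)
    (hHnn : ∀ ω, 0 ≤ H ω) (hint : ∀ Q ∈ 𝒬, Integrable H Q)
    (hbdd : BddAbove {r : ℝ | ∃ Q ∈ 𝒬, r = ∫ ω, H ω ∂Q}) (hα : 0 < α) {φ : Ω → ℝ}
    (hφ : φ ∈ testsOfMeanGE P α)
    (hmin : IsMinOn (fun φ => upperExpectation 𝒬 fun ω => H ω * φ ω) (testsOfMeanGE P α) φ) :
    ∃ φt ∈ testsOfMeanGE P α, ∫ ω, φt ω ∂P = α ∧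
      IsMinOn (fun φ => upperExpectation 𝒬 fun ω => H ω * φ ω) (testsOfMeanGE P α) φt := by
  obtain ⟨hφtest, hφα⟩ := hφ
  set β := ∫ ω, φ ω ∂P
  have hβ : 0 < β := hα.trans_le hφα
  have hc : α / β ∈ Icc (0 : ℝ) 1 := ⟨by positivity, (div_le_one hβ).2 hφα⟩
  have hmean : ∫ ω, α / β * φ ω ∂P = α := by rw [integral_const_mul, div_mul_cancel₀ α hβ.ne']
  refine ⟨fun ω => α / β * φ ω, ⟨hφtest.const_mul hc, hmean.ge⟩, hmean, fun ψ hψ => ?_⟩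
  refine le_trans (upperExpectation_le h𝒬 fun Q hQ => ?_) (hmin hψ)
  calc ∫ ω, H ω * (α / β * φ ω) ∂Q = α / β * ∫ ω, H ω * φ ω ∂Q := by
        rw [← integral_const_mul]; simp only [mul_left_comm]
    _ ≤ ∫ ω, H ω * φ ω ∂Q :=
        mul_le_of_le_one_left (integral_nonneg fun ω => mul_nonneg (hHnn ω) (hφtest.2 ω).1) hc.2
    _ ≤ _ := integral_mul_le_upperExpectation hHnn hint hbdd hφtest hQ

end Minimizer

theorem stmt3_general {Ω : Type*} [MeasurableSpace Ω] (P : Measure Ω) [IsProbabilityMeasure P]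
    (𝒬 : Set (Measure Ω)) (h𝒬ne : 𝒬.Nonempty)
    (hequiv : ∀ Q ∈ 𝒬, Q ≪ P ∧ P ≪ Q)
    (H : Ω → ℝ) (hHnn : ∀ ω, 0 ≤ H ω)
    (hint : ∀ Q ∈ 𝒬, Integrable H Q)
    (hbdd : BddAbove {r : ℝ | ∃ Q ∈ 𝒬, r = ∫ ω, H ω ∂Q})
    (α : ℝ) (hα : α ∈ Set.Ioo (0 : ℝ) 1) :
    ∃ φt : Ω → ℝ, Measurable φt ∧ (∀ ω, φt ω ∈ Set.Icc (0 : ℝ) 1) ∧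
      (∫ ω, φt ω ∂P) = α ∧
      sInf {r : ℝ | ∃ φ : Ω → ℝ, Measurable φ ∧ (∀ ω, φ ω ∈ Set.Icc (0 : ℝ) 1) ∧
          α ≤ ∫ ω, φ ω ∂P ∧ r = sSup {s : ℝ | ∃ Q ∈ 𝒬, s = ∫ ω, H ω * φ ω ∂Q}} =
        sSup {s : ℝ | ∃ Q ∈ 𝒬, s = ∫ ω, H ω * φt ω ∂Q} := by
  obtain ⟨φ, hφ, hmin⟩ := exists_isMinOn_upperExpectation h𝒬ne (fun Q hQ => (hequiv Q hQ).1)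
    hHnn hint hbdd hα.2.le
  obtain ⟨φt, ⟨⟨hφtm, hφt01⟩, hφtα⟩, hmean, hmint⟩ :=
    exists_isMinOn_upperExpectation_integral_eq h𝒬ne hHnn hint hbdd hα.1 hφ hmin
  refine ⟨φt, hφtm, hφt01, hmean, IsLeast.csInf_eq ⟨⟨φt, hφtm, hφt01, hφtα, rfl⟩, ?_⟩⟩
  rintro _ ⟨ψ, hψm, hψ01, hψα, rfl⟩
  exact hmint ⟨⟨hψm, hψ01⟩, hψα⟩

theorem stmt3 {Ω : Type*} [MeasurableSpace Ω] (P : Measure Ω) [IsProbabilityMeasure P]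
    (𝒬 : Set (Measure Ω)) (h𝒬ne : 𝒬.Nonempty)
    (h𝒬prob : ∀ Q ∈ 𝒬, IsProbabilityMeasure Q)
    (hequiv : ∀ Q ∈ 𝒬, Q ≪ P ∧ P ≪ Q)
    (H : Ω → ℝ) (hH : Measurable H) (hHnn : ∀ ω, 0 ≤ H ω)
    (hint : ∀ Q ∈ 𝒬, Integrable H Q)
    (hbdd : BddAbove {r : ℝ | ∃ Q ∈ 𝒬, r = ∫ ω, H ω ∂Q})
    (α : ℝ) (hα : α ∈ Set.Ioo (0 : ℝ) 1) :
    ∃ φt : Ω → ℝ, Measurable φt ∧ (∀ ω, φt ω ∈ Set.Icc (0 : ℝ) 1) ∧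
      (∫ ω, φt ω ∂P) = α ∧
      sInf {r : ℝ | ∃ φ : Ω → ℝ, Measurable φ ∧ (∀ ω, φ ω ∈ Set.Icc (0 : ℝ) 1) ∧
          α ≤ ∫ ω, φ ω ∂P ∧ r = sSup {s : ℝ | ∃ Q ∈ 𝒬, s = ∫ ω, H ω * φ ω ∂Q}} =
        sSup {s : ℝ | ∃ Q ∈ 𝒬, s = ∫ ω, H ω * φt ω ∂Q} :=
  stmt3_general P 𝒬 h𝒬ne hequiv H hHnn hint hbdd α hα
end

section
/- Fix C > 0. For α ∈ (0,1) let u(α) = inf{u ∈ R : ∃ predictable ξ with sup_k ||ξ_k||_∞ ≤ C and P(u + Σ_{k=1}^T ξ_k·(X_k − X_{k−1}) ≥ H) ≥ α}. Then α ↦ u(α) is nondecreasing and lim_{α↑1} u(α) ≥ sup_{Q ∈ P*} E_Q[H]. -/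
/-!
Under every `Q ∈ 𝒬` the gain `∑ ξ_k · (X_k - X_{k-1})` of a bounded predictable strategy is a
martingale transform, hence has `Q`-mean zero. So if `H ≤ v + gain` on the success set `A`, then
`∫_A H dQ ≤ v Q(A) + C ∫_{Aᶜ} V dQ`, where `V = ∑ |X_k - X_{k-1}|` dominates the gain per unit
of `C`. If `P(A) ≥ a > 0`, the equivalence `P ~ Q` keeps `Q(A)` away from `0`, which bounds `v`
from below, so the infima are finite and monotone in `a`. As `a ↑ 1`, `P(Aᶜ) → 0`, so by
absolute continuity `Q(Aᶜ)` and the `Q`-integrals of `H` and `V` over `Aᶜ` become small, forcing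
`v ≥ E_Q[H] - η`.
-/

open MeasureTheory Set

namespace MeasureTheory

variable {Ω : Type*} {m0 : MeasurableSpace Ω} {μ : Measure Ω}

theorem Martingale.comp_continuousLinearMap {ι E F : Type*} [Preorder ι] {ℱ : Filtration ι m0}
    [NormedAddCommGroup E] [NormedSpace ℝ E] [CompleteSpace E]
    [NormedAddCommGroup F] [NormedSpace ℝ F] [CompleteSpace F] {f : ι → Ω → E}
    (hf : Martingale f ℱ μ) (L : E →L[ℝ] F) :
    Martingale (fun i ω => L (f i ω)) ℱ μ :=
  ⟨fun i => L.continuous.comp_stronglyMeasurable (hf.stronglyAdapted i), fun _ j hij =>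
    (L.comp_condExp_comm (hf.integrable j)).symm.trans ((hf.condExp_ae_eq hij).fun_comp L)⟩

variable {ℱ : Filtration ℕ m0}

theorem Martingale.integral_mul_sub_eq_zero [IsFiniteMeasure μ] {Y : ℕ → Ω → ℝ}
    (hY : Martingale Y ℱ μ) {i j : ℕ} (hij : i ≤ j) {f : Ω → ℝ} (hf : StronglyMeasurable[ℱ i] f)
    {c : ℝ} (hfc : ∀ ω, |f ω| ≤ c) :
    ∫ ω, f ω * (Y j ω - Y i ω) ∂μ = 0 := by
  have hΔ : Integrable (Y j - Y i) μ := (hY.integrable j).sub (hY.integrable i)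
  have hfΔ : Integrable (f * (Y j - Y i)) μ :=
    hΔ.bdd_mul (hf.mono (ℱ.le i)).aestronglyMeasurable (ae_of_all _ hfc)
  have hcond : μ[Y j - Y i | ℱ i] =ᵐ[μ] 0 := by
    filter_upwards [condExp_sub (hY.integrable j) (hY.integrable i) (ℱ i),
      hY.condExp_ae_eq hij] with ω hsub hj
    rw [hsub, Pi.sub_apply, hj,
      condExp_of_stronglyMeasurable (ℱ.le i) (hY.stronglyAdapted i) (hY.integrable i)]
    exact sub_self _
  calc ∫ ω, f ω * (Y j ω - Y i ω) ∂μ = ∫ ω, μ[f * (Y j - Y i) | ℱ i] ω ∂μ :=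
        (integral_condExp (ℱ.le i)).symm
    _ = ∫ ω, (f * μ[Y j - Y i | ℱ i]) ω ∂μ :=
        integral_congr_ae (condExp_mul_of_stronglyMeasurable_left hf hfΔ hΔ)
    _ = 0 := integral_eq_zero_of_ae (by
        filter_upwards [hcond] with ω hω
        simp [hω])

variable {d T : ℕ} {X ξ : ℕ → Ω → Fin d → ℝ} {C : ℝ}

theorem Martingale.eval (hX : Martingale X ℱ μ) (i : Fin d) :
    Martingale (fun n ω => X n ω i) ℱ μ :=
  hX.comp_continuousLinearMap (ContinuousLinearMap.proj i)

def tradingGain (ξ X : ℕ → Ω → Fin d → ℝ) (T : ℕ) (ω : Ω) : ℝ :=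
  ∑ k ∈ Finset.Icc 1 T, ∑ i, ξ k ω i * (X k ω i - X (k - 1) ω i)

def pathVariation (X : ℕ → Ω → Fin d → ℝ) (T : ℕ) (ω : Ω) : ℝ :=
  ∑ k ∈ Finset.Icc 1 T, ∑ i, |X k ω i - X (k - 1) ω i|

theorem pathVariation_nonneg (ω : Ω) : 0 ≤ pathVariation X T ω :=
  Finset.sum_nonneg fun _ _ => Finset.sum_nonneg fun _ _ => abs_nonneg _

theorem abs_tradingGain_le (hξC : ∀ k ω i, |ξ k ω i| ≤ C) (ω : Ω) :
    |tradingGain ξ X T ω| ≤ C * pathVariation X T ω := by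
  rw [tradingGain, pathVariation, Finset.mul_sum]
  refine (Finset.abs_sum_le_sum_abs _ _).trans (Finset.sum_le_sum fun k _ => ?_)
  rw [Finset.mul_sum]
  refine (Finset.abs_sum_le_sum_abs _ _).trans (Finset.sum_le_sum fun i _ => ?_)
  rw [abs_mul]
  exact mul_le_mul_of_nonneg_right (hξC k ω i) (abs_nonneg _)

theorem StronglyAdapted.measurable_tradingGain (hX : StronglyAdapted ℱ X)
    (hξ : ∀ k, 1 ≤ k → StronglyMeasurable[ℱ (k - 1)] (ξ k)) :
    Measurable (tradingGain ξ X T) := by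
  have hXm : ∀ n, Measurable (X n) := fun n => ((hX n).mono (ℱ.le n)).measurable
  refine Finset.measurable_sum _ fun k hk => Finset.measurable_sum _ fun i _ => ?_
  exact (((hξ k (Finset.mem_Icc.1 hk).1).mono (ℱ.le _)).measurable.eval).mul
    ((hXm k).eval.sub (hXm (k - 1)).eval)

theorem Martingale.integrable_pathVariation (hX : Martingale X ℱ μ) :
    Integrable (pathVariation X T) μ :=
  integrable_finsetSum _ fun k _ => integrable_finsetSum _ fun i _ =>
    (((hX.eval i).integrable k).sub ((hX.eval i).integrable (k - 1))).abs

theorem Martingale.integrable_mul_increment (hX : Martingale X ℱ μ)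
    (hξ : ∀ k, 1 ≤ k → StronglyMeasurable[ℱ (k - 1)] (ξ k)) (hξC : ∀ k ω i, |ξ k ω i| ≤ C)
    {k : ℕ} (hk : 1 ≤ k) (i : Fin d) :
    Integrable (fun ω => ξ k ω i * (X k ω i - X (k - 1) ω i)) μ :=
  (((hX.eval i).integrable k).sub ((hX.eval i).integrable (k - 1))).bdd_mul
    ((hξ k hk).mono (ℱ.le _)).measurable.eval.aestronglyMeasurable (ae_of_all _ fun ω => hξC k ω i)

theorem Martingale.integrable_tradingGain (hX : Martingale X ℱ μ)
    (hξ : ∀ k, 1 ≤ k → StronglyMeasurable[ℱ (k - 1)] (ξ k)) (hξC : ∀ k ω i, |ξ k ω i| ≤ C) :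
    Integrable (tradingGain ξ X T) μ :=
  integrable_finsetSum _ fun _ hk => integrable_finsetSum _ fun i _ =>
    hX.integrable_mul_increment hξ hξC (Finset.mem_Icc.1 hk).1 i

theorem Martingale.integral_tradingGain_eq_zero [IsFiniteMeasure μ] (hX : Martingale X ℱ μ)
    (hξ : ∀ k, 1 ≤ k → StronglyMeasurable[ℱ (k - 1)] (ξ k)) (hξC : ∀ k ω i, |ξ k ω i| ≤ C) :
    ∫ ω, tradingGain ξ X T ω ∂μ = 0 := by
  simp only [tradingGain]
  have hterm := fun k (hk : k ∈ Finset.Icc 1 T) =>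
    hX.integrable_mul_increment hξ hξC (Finset.mem_Icc.1 hk).1
  rw [integral_finsetSum _ fun k hk => integrable_finsetSum _ fun i _ => hterm k hk i]
  refine Finset.sum_eq_zero fun k hk => ?_
  rw [integral_finsetSum _ fun i _ => hterm k hk i]
  exact Finset.sum_eq_zero fun i _ => (hX.eval i).integral_mul_sub_eq_zero (Nat.sub_le k 1)
    ((continuous_apply i).comp_stronglyMeasurable (hξ k (Finset.mem_Icc.1 hk).1))
    (fun ω => hξC k ω i)

theorem Martingale.setIntegral_le_of_le_add_tradingGain [IsFiniteMeasure μ]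
    (hX : Martingale X ℱ μ) (hξ : ∀ k, 1 ≤ k → StronglyMeasurable[ℱ (k - 1)] (ξ k))
    (hξC : ∀ k ω i, |ξ k ω i| ≤ C) {H : Ω → ℝ} (hH : Integrable H μ) {A : Set Ω}
    (hA : MeasurableSet A) {v : ℝ} (hHA : ∀ ω ∈ A, H ω ≤ v + tradingGain ξ X T ω) :
    ∫ ω in A, H ω ∂μ ≤ v * μ.real A + C * ∫ ω in Aᶜ, pathVariation X T ω ∂μ := by
  have hW := hX.integrable_tradingGain (T := T) hξ hξC
  have hG := hX.integrable_pathVariation (T := T)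
  have hsplit := integral_add_compl hA hW
  rw [hX.integral_tradingGain_eq_zero hξ hξC] at hsplit
  have hWc : -∫ ω in Aᶜ, tradingGain ξ X T ω ∂μ ≤ C * ∫ ω in Aᶜ, pathVariation X T ω ∂μ :=
    calc -∫ ω in Aᶜ, tradingGain ξ X T ω ∂μ ≤ ∫ ω in Aᶜ, |tradingGain ξ X T ω| ∂μ :=
          (neg_le_abs _).trans abs_integral_le_integral_abs
      _ ≤ ∫ ω in Aᶜ, C * pathVariation X T ω ∂μ :=
          integral_mono hW.abs.integrableOn (hG.const_mul C).integrableOn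
            (abs_tradingGain_le hξC)
      _ = C * ∫ ω in Aᶜ, pathVariation X T ω ∂μ := integral_const_mul C _
  calc ∫ ω in A, H ω ∂μ ≤ ∫ ω in A, (v + tradingGain ξ X T ω) ∂μ :=
        setIntegral_mono_on hH.integrableOn ((integrable_const v).add hW).integrableOn hA hHA
    _ = v * μ.real A + ∫ ω in A, tradingGain ξ X T ω ∂μ := by
        rw [integral_add (integrable_const v).integrableOn hW.integrableOn, setIntegral_const,
          smul_eq_mul, mul_comm]
    _ ≤ v * μ.real A + C * ∫ ω in Aᶜ, pathVariation X T ω ∂μ := by linarith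

theorem Measure.AbsolutelyContinuous.exists_pos_forall_setIntegral_lt {P Q : Measure Ω}
    [IsFiniteMeasure P] [IsFiniteMeasure Q] (hQP : Q ≪ P) {g : Ω → ℝ} (hg : Integrable g Q)
    {ε : ℝ} (hε : 0 < ε) : ∃ δ > 0, ∀ s, P.real s < δ → ∫ ω in s, g ω ∂Q < ε := by
  obtain ⟨η, hη, hgη⟩ := exists_pos_setLIntegral_lt_of_measure_lt (μ := Q)
    hg.hasFiniteIntegral.ne (ENNReal.ofReal_pos.2 hε).ne'
  obtain ⟨δ, hδ, hQη⟩ := exists_pos_setLIntegral_lt_of_measure_lt (μ := P)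
    (Q.lintegral_rnDeriv_lt_top P).ne hη.ne'
  have hδ' : min δ 1 ≠ ⊤ := ne_top_of_le_ne_top ENNReal.one_ne_top (min_le_right _ _)
  refine ⟨(min δ 1).toReal, ENNReal.toReal_pos (lt_min hδ one_pos).ne' hδ', fun s hs => ?_⟩
  rw [measureReal_def, ENNReal.toReal_lt_toReal (measure_ne_top P s) hδ'] at hs
  have hQs : Q s < η := Measure.setLIntegral_rnDeriv hQP s ▸ hQη s (hs.trans_le (min_le_left _ _))
  refine (ENNReal.ofReal_lt_ofReal_iff hε).1 (lt_of_le_of_lt ?_ (hgη s hQs))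
  calc ENNReal.ofReal (∫ ω in s, g ω ∂Q) ≤ ‖∫ ω in s, g ω ∂Q‖ₑ := by
        rw [Real.enorm_eq_ofReal_abs]
        exact ENNReal.ofReal_le_ofReal (le_abs_self _)
    _ ≤ ∫⁻ ω in s, ‖g ω‖ₑ ∂Q := enorm_integral_le_lintegral_enorm _

def quantileHedgingLevels (P : Measure Ω) (ℱ : Filtration ℕ m0) (C : ℝ)
    (X : ℕ → Ω → Fin d → ℝ) (T : ℕ) (H : Ω → ℝ) (a : ℝ) : Set ℝ :=
  {v | ∃ ξ : ℕ → Ω → Fin d → ℝ, (∀ k, 1 ≤ k → StronglyMeasurable[ℱ (k - 1)] (ξ k)) ∧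
    (∀ k ω i, |ξ k ω i| ≤ C) ∧ ENNReal.ofReal a ≤ P {ω | H ω ≤ v + tradingGain ξ X T ω}}

variable {P Q : Measure Ω} {H : Ω → ℝ}

theorem quantileHedgingLevels_antitone :
    Antitone (quantileHedgingLevels P ℱ C X T H) := fun _ _ hab _ ⟨ξ, hξ, hξC, hP⟩ =>
  ⟨ξ, hξ, hξC, (ENNReal.ofReal_le_ofReal hab).trans hP⟩

theorem quantileHedgingLevels_nonempty [IsProbabilityMeasure P] (hC : 0 ≤ C) {b : ℝ}
    (hb : b < 1) : (quantileHedgingLevels P ℱ C X T H b).Nonempty := by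
  have hmono : Monotone fun n : ℕ => {ω | H ω ≤ n} := fun m n hmn ω (hω : H ω ≤ m) =>
    hω.trans (Nat.cast_le.2 hmn)
  have hunion : ⋃ n : ℕ, {ω | H ω ≤ n} = univ :=
    eq_univ_of_forall fun ω => mem_iUnion.2 (exists_nat_ge (H ω))
  have htendsto := tendsto_measure_iUnion_atTop (μ := P) hmono
  rw [hunion, measure_univ] at htendsto
  obtain ⟨n, hn⟩ := (htendsto.eventually (lt_mem_nhds (ENNReal.ofReal_lt_one.2 hb))).exists
  refine ⟨n, fun _ _ _ => 0, fun _ _ => stronglyMeasurable_const, fun _ _ _ => ?_, ?_⟩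
  · simpa using hC
  · simpa [tradingGain] using hn.le

theorem bddBelow_quantileHedgingLevels [IsFiniteMeasure P] [IsFiniteMeasure Q] (hPQ : P ≪ Q)
    (hX : Martingale X ℱ Q) (hH : Measurable H) (hH0 : ∀ ω, 0 ≤ H ω) (hHQ : Integrable H Q)
    (hC : 0 ≤ C) {a : ℝ} (ha : 0 < a) : BddBelow (quantileHedgingLevels P ℱ C X T H a) := by
  obtain ⟨δ, hδ, hsmall⟩ := hPQ.exists_pos_forall_setIntegral_lt (integrable_const (1 : ℝ)) ha
  refine ⟨-(C * ∫ ω, pathVariation X T ω ∂Q) / δ, fun v ⟨ξ, hξ, hξC, hPA⟩ => ?_⟩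
  set A := {ω | H ω ≤ v + tradingGain ξ X T ω}
  have hA : MeasurableSet A :=
    measurableSet_le hH (measurable_const.add (hX.stronglyAdapted.measurable_tradingGain hξ))
  have hQA : δ ≤ Q.real A := by
    by_contra! hlt
    have := hsmall A hlt
    rw [setIntegral_const, smul_eq_mul, mul_one] at this
    exact this.not_ge ((ENNReal.ofReal_le_iff_le_toReal (measure_ne_top P A)).1 hPA)
  have hkey := hX.setIntegral_le_of_le_add_tradingGain hξ hξC hHQ hA fun ω hω => hω
  have hHA : 0 ≤ ∫ ω in A, H ω ∂Q := setIntegral_nonneg hA fun ω _ => hH0 ω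
  have hGc : ∫ ω in Aᶜ, pathVariation X T ω ∂Q ≤ ∫ ω, pathVariation X T ω ∂Q :=
    setIntegral_le_integral hX.integrable_pathVariation (ae_of_all _ pathVariation_nonneg)
  have hG0 : 0 ≤ ∫ ω, pathVariation X T ω ∂Q := integral_nonneg pathVariation_nonneg
  rw [div_le_iff₀ hδ]
  rcases le_or_gt 0 v with hv | hv
  · nlinarith [mul_nonneg hv hδ.le, mul_nonneg hC hG0]
  · nlinarith [mul_le_mul_of_nonpos_left hQA hv.le, mul_le_mul_of_nonneg_left hGc hC]

theorem exists_integral_sub_le_of_mem_quantileHedgingLevels [IsProbabilityMeasure P]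
    [IsProbabilityMeasure Q] (hQP : Q ≪ P) (hX : Martingale X ℱ Q) (hH : Measurable H)
    (hH0 : ∀ ω, 0 ≤ H ω) (hHQ : Integrable H Q) (hC : 0 ≤ C) {η : ℝ} (hη : 0 < η) :
    ∃ a ∈ Ioo (0 : ℝ) 1, ∀ v ∈ quantileHedgingLevels P ℱ C X T H a, ∫ ω, H ω ∂Q - η ≤ v := by
  have hG := hX.integrable_pathVariation (T := T)
  have hF : Integrable (fun ω => H ω + C * pathVariation X T ω + 1) Q :=
    (hHQ.add (hG.const_mul C)).add (integrable_const 1)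
  -- the constant `1` makes the bound control `Q Aᶜ` as well
  obtain ⟨δ, hδ, hsmall⟩ :=
    hQP.exists_pos_forall_setIntegral_lt hF (lt_min (by positivity : 0 < η / 3) one_half_pos)
  have hδ1 : 0 < min δ 1 := lt_min hδ one_pos
  refine ⟨1 - min δ 1 / 2, ⟨by linarith [min_le_right δ 1], by linarith⟩,
    fun v ⟨ξ, hξ, hξC, hPA⟩ => ?_⟩
  set A := {ω | H ω ≤ v + tradingGain ξ X T ω}
  have hA : MeasurableSet A :=
    measurableSet_le hH (measurable_const.add (hX.stronglyAdapted.measurable_tradingGain hξ))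
  have hPAc : P.real Aᶜ < δ := by
    rw [probReal_compl_eq_one_sub hA]
    have := (ENNReal.ofReal_le_iff_le_toReal (measure_ne_top P A)).1 hPA
    linarith [min_le_left δ 1, measureReal_def P A]
  have hFc := hsmall Aᶜ hPAc
  rw [integral_add (f := fun ω => H ω + C * pathVariation X T ω)
    (hHQ.add (hG.const_mul C)).integrableOn (integrable_const 1).integrableOn,
    integral_add hHQ.integrableOn (hG.const_mul C).integrableOn, integral_const_mul,
    setIntegral_const, smul_eq_mul, mul_one] at hFc
  have hkey := hX.setIntegral_le_of_le_add_tradingGain hξ hξC hHQ hA fun ω hω => hω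
  have htotal := integral_add_compl hA hHQ
  have hQA := probReal_compl_eq_one_sub (μ := Q) hA
  have hHc : 0 ≤ ∫ ω in Aᶜ, H ω ∂Q := setIntegral_nonneg hA.compl fun ω _ => hH0 ω
  have hGc : 0 ≤ C * ∫ ω in Aᶜ, pathVariation X T ω ∂Q :=
    mul_nonneg hC (setIntegral_nonneg hA.compl fun ω _ => pathVariation_nonneg ω)
  have hH0' : 0 ≤ ∫ ω, H ω ∂Q := integral_nonneg hH0
  have hQAc : 0 ≤ Q.real Aᶜ := measureReal_nonneg
  have hε₀ := min_le_left (η / 3) (1 / 2)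
  have hε₀' := min_le_right (η / 3) (1 / 2)
  rcases le_or_gt 0 v with hv | hv
  · nlinarith [mul_nonneg hv hQAc]
  · nlinarith [mul_le_mul_of_nonpos_left (show Q.real Aᶜ ≤ 1 / 2 by linarith) hv.le]

end MeasureTheory

theorem stmt6_general {Ω : Type*} {m0 : MeasurableSpace Ω} (P : Measure Ω) [IsProbabilityMeasure P]
    (ℱ : Filtration ℕ m0)
    (d T : ℕ) (X : ℕ → Ω → (Fin d → ℝ))
    (𝒬 : Set (Measure Ω)) (h𝒬ne : 𝒬.Nonempty)
    (h𝒬prob : ∀ Q ∈ 𝒬, IsProbabilityMeasure Q)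
    (hequiv : ∀ Q ∈ 𝒬, Q ≪ P ∧ P ≪ Q)
    (hX : ∀ Q ∈ 𝒬, Martingale X ℱ Q)
    (H : Ω → ℝ) (hH : Measurable H) (hHnn : ∀ ω, 0 ≤ H ω)
    (hint : ∀ Q ∈ 𝒬, Integrable H Q)
    (S : ℝ) (hS : S = sSup {r : ℝ | ∃ Q ∈ 𝒬, r = ∫ ω, H ω ∂Q})
    (C : ℝ) (hC : 0 < C)
    (u : ℝ → ℝ)
    (hu : ∀ a : ℝ, u a = sInf {v : ℝ | ∃ ξ : ℕ → Ω → (Fin d → ℝ),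
        (∀ k, 1 ≤ k → StronglyMeasurable[ℱ (k - 1)] (ξ k)) ∧
        (∀ k ω i, |ξ k ω i| ≤ C) ∧
        ENNReal.ofReal a ≤ P {ω | H ω ≤
          v + ∑ k ∈ Finset.Icc 1 T, ∑ i, ξ k ω i * (X k ω i - X (k - 1) ω i)}}) :
    (∀ a b : ℝ, 0 < a → a ≤ b → b < 1 → u a ≤ u b) ∧
      ∀ ε : ℝ, 0 < ε → ∃ a ∈ Set.Ioo (0 : ℝ) 1, S - ε ≤ u a := by
  have hu' : ∀ a, u a = sInf (quantileHedgingLevels P ℱ C X T H a) := hu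
  obtain ⟨Q₀, hQ₀⟩ := h𝒬ne
  have := h𝒬prob Q₀ hQ₀
  refine ⟨fun a b ha hab hb => ?_, fun ε hε => ?_⟩
  · rw [hu', hu']
    exact csInf_le_csInf (bddBelow_quantileHedgingLevels (hequiv Q₀ hQ₀).2 (hX Q₀ hQ₀) hH hHnn
      (hint Q₀ hQ₀) hC.le ha) (quantileHedgingLevels_nonempty hC.le hb)
      (quantileHedgingLevels_antitone hab)
  · obtain ⟨_, ⟨Q, hQ, rfl⟩, hSQ⟩ :=
      exists_lt_of_lt_csSup (s := {r | ∃ Q ∈ 𝒬, r = ∫ ω, H ω ∂Q}) ⟨_, Q₀, hQ₀, rfl⟩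
        (hS ▸ sub_lt_self S (half_pos hε))
    have := h𝒬prob Q hQ
    obtain ⟨a, ha, hle⟩ := exists_integral_sub_le_of_mem_quantileHedgingLevels (hequiv Q hQ).1
      (hX Q hQ) hH hHnn (hint Q hQ) hC.le (half_pos hε)
    refine ⟨a, ha, ?_⟩
    rw [hu']
    exact le_csInf (quantileHedgingLevels_nonempty hC.le ha.2) fun v hv => by linarith [hle v hv]

theorem stmt6 {Ω : Type*} {m0 : MeasurableSpace Ω} (P : Measure Ω) [IsProbabilityMeasure P]
    (ℱ : Filtration ℕ m0) (hℱ0 : ℱ 0 = ⊥)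
    (d T : ℕ) (X : ℕ → Ω → (Fin d → ℝ))
    (𝒬 : Set (Measure Ω)) (h𝒬ne : 𝒬.Nonempty)
    (h𝒬prob : ∀ Q ∈ 𝒬, IsProbabilityMeasure Q)
    (hequiv : ∀ Q ∈ 𝒬, Q ≪ P ∧ P ≪ Q)
    (hX : ∀ Q ∈ 𝒬, Martingale X ℱ Q)
    (H : Ω → ℝ) (hH : Measurable H) (hHnn : ∀ ω, 0 ≤ H ω)
    (hint : ∀ Q ∈ 𝒬, Integrable H Q)
    (hbdd : BddAbove {r : ℝ | ∃ Q ∈ 𝒬, r = ∫ ω, H ω ∂Q})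
    (S : ℝ) (hS : S = sSup {r : ℝ | ∃ Q ∈ 𝒬, r = ∫ ω, H ω ∂Q})
    (C : ℝ) (hC : 0 < C)
    (u : ℝ → ℝ)
    (hu : ∀ a : ℝ, u a = sInf {v : ℝ | ∃ ξ : ℕ → Ω → (Fin d → ℝ),
        (∀ k, 1 ≤ k → StronglyMeasurable[ℱ (k - 1)] (ξ k)) ∧
        (∀ k ω i, |ξ k ω i| ≤ C) ∧
        ENNReal.ofReal a ≤ P {ω | H ω ≤
          v + ∑ k ∈ Finset.Icc 1 T, ∑ i, ξ k ω i * (X k ω i - X (k - 1) ω i)}}) :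
    (∀ a b : ℝ, 0 < a → a ≤ b → b < 1 → u a ≤ u b) ∧
      ∀ ε : ℝ, 0 < ε → ∃ a ∈ Set.Ioo (0 : ℝ) 1, S - ε ≤ u a :=
  stmt6_general P ℱ d T X 𝒬 h𝒬ne h𝒬prob hequiv hX H hH hHnn hint S hS C hC u hu
end

section
/- Let G ≥ 0 be a random variable, B_{t−1}^* an F_{t−1}-measurable random variable with |B_{t−1}^* − B_{t−1}| ≤ ε̃ a.s., and define B_t^* = esssup{ F 1_A + B_{t−1}^* 1_{A^c} : F is an F_t-measurable random variable from a class C, A ∈ F_t, B_{t−1}^* ≤ F 1_A + B_{t−1}^* 1_{A^c} ≤ G + ε̃ a.s. }, where B_t = esssup{ D F_t-measurable : B_{t−1} ≤ D ≤ G a.s. }. If the class C is dense in probability among F_t-measurable functions (i.e., for every F_t-measurable Z and δ, η > 0 there is F ∈ C with P(|F − Z| > δ) < η), then |B_t^* − B_t| ≤ ε̃ P-almost surely. -/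
/-!
Every admissible pasted function `D` satisfies `max (D - ε) B_{t-1} ≤ B_t`, whence
`B_t^* ≤ B_t + ε`. Conversely, for an admissible `D` for `B_t`, approximate `D + ε/2` within
`ε/2` in probability by some `F ∈ 𝒞`, and paste `F` on `{B_{t-1}^* ≤ F ≤ D + ε}` and `B_{t-1}^*`
elsewhere. Since `|B_{t-1}^* - B_{t-1}| ≤ ε`, this pasted function is admissible for `B_t^*`, and
wherever the approximation succeeds it is `≥ D`. So `P(B_t^* < D)` is arbitrarily small, and
`B_t ≤ B_t^*`.
-/

open MeasureTheory Filter Set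

/-- `g` is an essential supremum (under `P`) of the family `S` of random variables. -/
def IsEssSup {Ω : Type*} {mΩ : MeasurableSpace Ω} (P : Measure Ω)
    (S : Set (Ω → ℝ)) (g : Ω → ℝ) : Prop :=
  (∀ f ∈ S, f ≤ᵐ[P] g) ∧ ∀ h : Ω → ℝ, (∀ f ∈ S, f ≤ᵐ[P] h) → g ≤ᵐ[P] h

section

variable {Ω : Type*} {m0 : MeasurableSpace Ω} {P : Measure Ω}

theorem measure_eq_zero_of_forall_lt_ofReal {s : Set Ω}
    (h : ∀ η : ℝ, 0 < η → P s < ENNReal.ofReal η) : P s = 0 :=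
  nonpos_iff_eq_zero.mp <| ENNReal.le_of_forall_pos_le_add fun η hη _ => by
    simpa using (h η hη).le

theorem ae_le_of_forall_exists_ae_le_measure_lt {D g : Ω → ℝ}
    (h : ∀ η : ℝ, 0 < η → ∃ f : Ω → ℝ, f ≤ᵐ[P] g ∧ P {ω | f ω < D ω} < ENNReal.ofReal η) :
    D ≤ᵐ[P] g := by
  refine ae_iff.mpr <| measure_eq_zero_of_forall_lt_ofReal fun η hη => ?_
  obtain ⟨f, hfg, hf⟩ := h η hη
  have hsub : {ω | ¬ D ω ≤ g ω} ⊆ {ω | f ω < D ω} ∪ {ω | ¬ f ω ≤ g ω} := by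
    intro ω hω
    by_contra! hcon
    simp only [mem_union, mem_ofPred_eq, not_le, not_or, not_lt] at hω hcon
    linarith [hcon.1, hcon.2]
  calc P {ω | ¬ D ω ≤ g ω} ≤ P {ω | f ω < D ω} + P {ω | ¬ f ω ≤ g ω} :=
        (measure_mono hsub).trans (measure_union_le _ _)
    _ = P {ω | f ω < D ω} := by rw [ae_iff.mp hfg, add_zero]
    _ < ENNReal.ofReal η := hf

section Pasting

variable (P) (mt : MeasurableSpace Ω) (𝒞 : Set (Ω → ℝ))

def measurableBetween (L U : Ω → ℝ) : Set (Ω → ℝ) :=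
  {D | Measurable[mt] D ∧ ∀ᵐ ω ∂P, L ω ≤ D ω ∧ D ω ≤ U ω}

def pastedBetween (L U : Ω → ℝ) : Set (Ω → ℝ) :=
  {D | ∃ F ∈ 𝒞, ∃ A : Set Ω, MeasurableSet[mt] A ∧
    D = (fun ω => A.indicator F ω + Aᶜ.indicator L ω) ∧ ∀ᵐ ω ∂P, L ω ≤ D ω ∧ D ω ≤ U ω}

variable {P mt 𝒞}

open Classical in
theorem indicator_add_compl_indicator_apply {M : Type*} [AddZeroClass M] (A : Set Ω)
    (F L : Ω → M) (ω : Ω) :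
    A.indicator F ω + Aᶜ.indicator L ω = if ω ∈ A then F ω else L ω := by
  by_cases hω : ω ∈ A <;> simp [hω]

theorem measurable_of_mem_pastedBetween (h𝒞 : ∀ F ∈ 𝒞, Measurable[mt] F) {L U D : Ω → ℝ}
    (hL : Measurable[mt] L) (hD : D ∈ pastedBetween P mt 𝒞 L U) : Measurable[mt] D := by
  obtain ⟨F, hF, A, hA, rfl, -⟩ := hD
  exact ((h𝒞 F hF).indicator hA).add (hL.indicator hA.compl)

theorem max_sub_mem_measurableBetween {L U D : Ω → ℝ} {ε : ℝ} (hD : Measurable[mt] D)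
    (hL : Measurable[mt] L) (hLU : ∀ᵐ ω ∂P, L ω ≤ U ω) (hDU : ∀ᵐ ω ∂P, D ω ≤ U ω + ε) :
    (fun ω => max (D ω - ε) (L ω)) ∈ measurableBetween P mt L U := by
  refine ⟨(hD.sub measurable_const).max hL, ?_⟩
  filter_upwards [hLU, hDU] with ω hLU hDU
  exact ⟨le_max_right _ _, max_le (by linarith) hLU⟩

theorem exists_mem_pastedBetween_measure_lt (h𝒞 : ∀ F ∈ 𝒞, Measurable[mt] F)
    (hdense : ∀ Z : Ω → ℝ, Measurable[mt] Z → ∀ δ : ℝ, 0 < δ → ∀ η : ℝ, 0 < η →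
      ∃ F ∈ 𝒞, P {ω | δ < |F ω - Z ω|} < ENNReal.ofReal η)
    {L L' U D : Ω → ℝ} {ε : ℝ} (hε : 0 < ε) (hL' : Measurable[mt] L')
    (hclose : ∀ᵐ ω ∂P, |L' ω - L ω| ≤ ε) (hD : D ∈ measurableBetween P mt L U)
    {η : ℝ} (hη : 0 < η) :
    ∃ D' ∈ pastedBetween P mt 𝒞 L' (fun ω => U ω + ε), P {ω | D' ω < D ω} < ENNReal.ofReal η := by
  obtain ⟨hDm, hLDU⟩ := hD
  obtain ⟨F, hF𝒞, hF⟩ := hdense (fun ω => D ω + ε / 2) (hDm.add measurable_const) (ε / 2)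
    (half_pos hε) η hη
  set A : Set Ω := {ω | L' ω ≤ F ω} ∩ {ω | F ω ≤ D ω + ε}
  have hA : MeasurableSet[mt] A := (measurableSet_le hL' (h𝒞 F hF𝒞)).inter
    (measurableSet_le (h𝒞 F hF𝒞) (hDm.add measurable_const))
  refine ⟨_, ⟨F, hF𝒞, A, hA, rfl, ?_⟩, (measure_mono ?_).trans_lt hF⟩
  · filter_upwards [hLDU, hclose] with ω hLDU hclose
    have := (abs_le.mp hclose).2
    simp only [indicator_add_compl_indicator_apply]
    split_ifs with hω
    · have hFD : F ω ≤ D ω + ε := hω.2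
      exact ⟨hω.1, by linarith⟩
    · exact ⟨le_rfl, by linarith⟩
  · intro ω hω
    simp only [mem_ofPred_eq, indicator_add_compl_indicator_apply] at hω ⊢
    by_contra! hF
    obtain ⟨hDF, hFD⟩ := abs_le.mp hF
    split_ifs at hω with hωA
    · linarith
    · exact hωA ⟨show L' ω ≤ F ω by linarith, show F ω ≤ D ω + ε by linarith⟩

end Pasting

end

theorem stmt15_general {Ω : Type*} {m0 : MeasurableSpace Ω} (P : Measure Ω) [IsProbabilityMeasure P]
    (mt : MeasurableSpace Ω)
    (G : Ω → ℝ)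
    (εt : ℝ) (hεt : 0 < εt)
    (Bprev Bprevs Bt Bts : Ω → ℝ)
    (hBprevMeas : Measurable[mt] Bprev)
    (hBprevLe : ∀ᵐ ω ∂P, Bprev ω ≤ G ω)
    (hBprevsMeas : Measurable[mt] Bprevs)
    (hclose : ∀ᵐ ω ∂P, |Bprevs ω - Bprev ω| ≤ εt)
    (𝒞 : Set (Ω → ℝ)) (h𝒞meas : ∀ F ∈ 𝒞, Measurable[mt] F)
    -- `𝒞` is dense in probability among `mt`-measurable functions
    (hdense : ∀ Z : Ω → ℝ, Measurable[mt] Z → ∀ δ : ℝ, 0 < δ → ∀ η : ℝ, 0 < η →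
      ∃ F ∈ 𝒞, P {ω | δ < |F ω - Z ω|} < ENNReal.ofReal η)
    (hBt : IsEssSup P
      {D : Ω → ℝ | Measurable[mt] D ∧ ∀ᵐ ω ∂P, Bprev ω ≤ D ω ∧ D ω ≤ G ω} Bt)
    (hBts : IsEssSup P
      {D : Ω → ℝ | ∃ F ∈ 𝒞, ∃ A : Set Ω, MeasurableSet[mt] A ∧
        D = (fun ω => A.indicator F ω + Aᶜ.indicator Bprevs ω) ∧
        ∀ᵐ ω ∂P, Bprevs ω ≤ D ω ∧ D ω ≤ G ω + εt} Bts) :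
    ∀ᵐ ω ∂P, |Bts ω - Bt ω| ≤ εt := by
  have hBts_le : Bts ≤ᵐ[P] fun ω => Bt ω + εt := by
    refine hBts.2 _ fun D hD => ?_
    have hDU : ∀ᵐ ω ∂P, D ω ≤ G ω + εt := by
      obtain ⟨-, -, -, -, -, hbounds⟩ := hD
      exact hbounds.mono fun _ h => h.2
    have hmax := hBt.1 _ <| max_sub_mem_measurableBetween
      (measurable_of_mem_pastedBetween h𝒞meas hBprevsMeas hD) hBprevMeas hBprevLe hDU
    filter_upwards [hmax] with ω hω
    linarith [le_max_left (D ω - εt) (Bprev ω)]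
  have hBt_le : Bt ≤ᵐ[P] Bts := by
    refine hBt.2 _ fun D hD => ae_le_of_forall_exists_ae_le_measure_lt fun η hη => ?_
    obtain ⟨D', hD', hlt⟩ :=
      exists_mem_pastedBetween_measure_lt h𝒞meas hdense hεt hBprevsMeas hclose hD hη
    exact ⟨D', hBts.1 D' hD', hlt⟩
  filter_upwards [hBts_le, hBt_le] with ω h₁ h₂
  exact abs_le.mpr ⟨by linarith, by linarith⟩

theorem stmt15 {Ω : Type*} {m0 : MeasurableSpace Ω} (P : Measure Ω) [IsProbabilityMeasure P]
    (mt : MeasurableSpace Ω) (hmt : mt ≤ m0)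
    (G : Ω → ℝ) (hG : ∀ᵐ ω ∂P, 0 ≤ G ω)
    (εt : ℝ) (hεt : 0 < εt)
    (Bprev Bprevs Bt Bts : Ω → ℝ)
    (hBprevMeas : Measurable[mt] Bprev)
    (hBprevNonneg : ∀ᵐ ω ∂P, 0 ≤ Bprev ω)
    (hBprevLe : ∀ᵐ ω ∂P, Bprev ω ≤ G ω)
    (hBprevsMeas : Measurable[mt] Bprevs)
    (hclose : ∀ᵐ ω ∂P, |Bprevs ω - Bprev ω| ≤ εt)
    (𝒞 : Set (Ω → ℝ)) (h𝒞meas : ∀ F ∈ 𝒞, Measurable[mt] F)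
    -- `𝒞` is dense in probability among `mt`-measurable functions
    (hdense : ∀ Z : Ω → ℝ, Measurable[mt] Z → ∀ δ : ℝ, 0 < δ → ∀ η : ℝ, 0 < η →
      ∃ F ∈ 𝒞, P {ω | δ < |F ω - Z ω|} < ENNReal.ofReal η)
    (hBt : IsEssSup P
      {D : Ω → ℝ | Measurable[mt] D ∧ ∀ᵐ ω ∂P, Bprev ω ≤ D ω ∧ D ω ≤ G ω} Bt)
    (hBts : IsEssSup P
      {D : Ω → ℝ | ∃ F ∈ 𝒞, ∃ A : Set Ω, MeasurableSet[mt] A ∧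
        D = (fun ω => A.indicator F ω + Aᶜ.indicator Bprevs ω) ∧
        ∀ᵐ ω ∂P, Bprevs ω ≤ D ω ∧ D ω ≤ G ω + εt} Bts) :
    ∀ᵐ ω ∂P, |Bts ω - Bt ω| ≤ εt :=
  stmt15_general (m0 := m0) P mt G εt hεt Bprev Bprevs Bt Bts hBprevMeas hBprevLe hBprevsMeas hclose
    𝒞 h𝒞meas hdense hBt hBts
end

section
/- Let V be a nonnegative Q-supermartingale for every Q ∈ P* with V_T ≥ H, where H ≥ 0 and sup_{Q∈P*} E_Q[H] < ∞. Then V_t ≥ esssup_{Q∈P*} E_Q[H | F_t] P-a.s. for every t = 0,...,T. -/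
open MeasureTheory Filter Set

theorem MeasureTheory.Supermartingale.condExp_le_of_ae_le {Ω ι : Type*} {m0 : MeasurableSpace Ω}
    [Preorder ι] {μ : Measure Ω} {ℱ : Filtration ι m0} {f : ι → Ω → ℝ} {g : Ω → ℝ}
    (hf : Supermartingale f ℱ μ) (hg : Integrable g μ) {i j : ι} (hij : i ≤ j)
    (hgf : g ≤ᵐ[μ] f j) : μ[g | ℱ i] ≤ᵐ[μ] f i :=
  (condExp_mono hg (hf.integrable j) hgf).trans (hf.condExp_ae_le hij)

theorem stmt19_general {Ω : Type*} {m0 : MeasurableSpace Ω} (P : Measure Ω)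
    (ℱ : Filtration ℕ m0) (T : ℕ)
    (𝒬 : Set (Measure Ω))
    (hequiv : ∀ Q ∈ 𝒬, Q ≪ P ∧ P ≪ Q)
    (H : Ω → ℝ)
    (hHint : ∀ Q ∈ 𝒬, Integrable H Q)
    (V : ℕ → Ω → ℝ)
    (hsuper : ∀ Q ∈ 𝒬, Supermartingale V ℱ Q)
    (hdom : ∀ᵐ ω ∂P, H ω ≤ V T ω) :
    ∀ t, t ≤ T → ∀ Q ∈ 𝒬, (Q[H | ℱ t]) ≤ᵐ[P] V t := by
  intro t ht Q hQ
  obtain ⟨hQP, hPQ⟩ := hequiv Q hQ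
  exact hPQ.ae_le ((hsuper Q hQ).condExp_le_of_ae_le (hHint Q hQ) ht (hQP.ae_le hdom))

theorem stmt19 {Ω : Type*} {m0 : MeasurableSpace Ω} (P : Measure Ω) [IsProbabilityMeasure P]
    (ℱ : Filtration ℕ m0) (T : ℕ)
    (𝒬 : Set (Measure Ω)) (h𝒬ne : 𝒬.Nonempty)
    (h𝒬prob : ∀ Q ∈ 𝒬, IsProbabilityMeasure Q)
    (hequiv : ∀ Q ∈ 𝒬, Q ≪ P ∧ P ≪ Q)
    (H : Ω → ℝ) (hH : Measurable H) (hHnn : ∀ ω, 0 ≤ H ω)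
    (hHint : ∀ Q ∈ 𝒬, Integrable H Q)
    (hbdd : BddAbove {r : ℝ | ∃ Q ∈ 𝒬, r = ∫ ω, H ω ∂Q})
    (V : ℕ → Ω → ℝ) (hVnn : ∀ t, ∀ᵐ ω ∂P, 0 ≤ V t ω)
    (hsuper : ∀ Q ∈ 𝒬, Supermartingale V ℱ Q)
    (hdom : ∀ᵐ ω ∂P, H ω ≤ V T ω) :
    ∀ t, t ≤ T → ∀ Q ∈ 𝒬, (Q[H | ℱ t]) ≤ᵐ[P] V t :=
  stmt19_general P ℱ T 𝒬 hequiv H hHint V hsuper hdom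
end
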